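/- A mapping f : D → ℝ^n has the L^{(2)}_p-property if and only if f^{-1}(y) does not contain a nondegenerate curve for every y ∈ ℝ^n, and for p-almost every closed rectifiable curve γ̃ in f(D) of the form γ̃ = f∘γ, the f-representation γ* of γ with respect to γ̃ is rectifiable and absolutely continuous. -/

import Mathlib

open MeasureTheory Set
open scoped ENNReal NNReal Topology Classical

noncomputable section

/-- `ℝⁿ` as Euclidean space. -/
abbrev Eucl (n : ℕ) := EuclideanSpace ℝ (Fin n)

/-- A curve in `ℝⁿ`: a continuous map on an interval `I ⊆ ℝ`. -/
structure CurveIn (n : ℕ) where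
  I : Set ℝ
  ordConn : I.OrdConnected
  toFun : ℝ → Eucl n
  cont : ContinuousOn toFun I

/-- The curve lies in the set `D`. -/
def CurveIn.InSet {n : ℕ} (γ : CurveIn n) (D : Set (Eucl n)) : Prop :=
  ∀ t ∈ γ.I, γ.toFun t ∈ D

/-- A curve is locally rectifiable if it has finite variation on every
compact subinterval of its interval of definition. -/
def CurveIn.LocRect {n : ℕ} (γ : CurveIn n) : Prop :=
  ∀ a ∈ γ.I, ∀ b ∈ γ.I, eVariationOn γ.toFun (γ.I ∩ Set.Icc a b) < ⊤

/-- Arc-length parametrization of `γ` on `[a, ·]`: the parameter value at which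
arclength `s` is attained. -/
def arcParam {n : ℕ} (γ : ℝ → Eucl n) (a : ℝ) (s : ℝ) : ℝ :=
  sInf {t : ℝ | a ≤ t ∧ s ≤ (eVariationOn γ (Set.Icc a t)).toReal}

/-- Arc-length (lower) integral `∫_γ ρ |dx|` of `ρ : ℝⁿ → [0,∞]` over the piece
of the curve `γ` corresponding to parameters in `[a,b]`. -/
def segLIntegral {n : ℕ} (ρ : Eucl n → ℝ≥0∞) (γ : ℝ → Eucl n) (a b : ℝ) : ℝ≥0∞ :=
  ∫⁻ s in Set.Ico (0 : ℝ) ((eVariationOn γ (Set.Icc a b)).toReal),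
    ρ (γ (arcParam γ a s))

/-- Arc-length integral `∫_γ ρ |dx|` over the whole (locally rectifiable) curve,
as the supremum over compact subintervals. -/
def CurveIn.lineIntegral {n : ℕ} (γ : CurveIn n) (ρ : Eucl n → ℝ≥0∞) : ℝ≥0∞ :=
  ⨆ (a : ℝ) (_ : a ∈ γ.I) (b : ℝ) (_ : b ∈ γ.I), segLIntegral ρ γ.toFun a b

/-- `ρ` is admissible for the curve family `Γ`:  `ρ` is a nonnegative Borel
function with `∫_γ ρ |dx| ≥ 1` for every locally rectifiable `γ ∈ Γ`. -/
def IsAdmissible {n : ℕ} (ρ : Eucl n → ℝ≥0∞) (Γ : Set (CurveIn n)) : Prop :=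
  Measurable ρ ∧ ∀ γ ∈ Γ, γ.LocRect → 1 ≤ γ.lineIntegral ρ

/-- The `p`-module of a curve family. -/
def pModule {n : ℕ} (p : ℝ) (Γ : Set (CurveIn n)) : ℝ≥0∞ :=
  ⨅ (ρ : Eucl n → ℝ≥0∞) (_ : IsAdmissible ρ Γ), ∫⁻ x, ρ x ^ p

/-- `f` is a discrete map on `D`: every fibre consists of isolated points. -/
def IsDiscreteMapOn {n : ℕ} (f : Eucl n → Eucl n) (D : Set (Eucl n)) : Prop :=
  ∀ y : Eucl n, ∀ x ∈ D, f x = y → ∃ U ∈ 𝓝 x, ∀ z ∈ U ∩ D, f z = y → z = x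

/-- `f` is an open map on `D`: it maps open subsets of `D` onto open sets. -/
def IsOpenMapOn {n : ℕ} (f : Eucl n → Eucl n) (D : Set (Eucl n)) : Prop :=
  ∀ U ⊆ D, IsOpen U → IsOpen (f '' U)

/-- Jacobian determinant `J(x,f)` (equal to `0` where `f` is not differentiable). -/
def jacDet {n : ℕ} (f : Eucl n → Eucl n) (x : Eucl n) : ℝ :=
  LinearMap.det (fderiv ℝ f x : Eucl n →ₗ[ℝ] Eucl n)

/-- `f` is orientation (sense) preserving on `D`
(analytic formulation: nonnegative Jacobian a.e. in `D`). -/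
def OrientationPreservingOn {n : ℕ} (f : Eucl n → Eucl n) (D : Set (Eucl n)) : Prop :=
  ∀ᵐ x ∂(volume.restrict D), 0 ≤ jacDet f x

/-- The local (topological) index `i(x,f)` of an open discrete sense-preserving map,
expressed as the local multiplicity. -/
def localIndex {n : ℕ} (f : Eucl n → Eucl n) (x : Eucl n) : ℕ∞ :=
  ⨅ U ∈ 𝓝 x, ⨆ y : Eucl n, (U ∩ f ⁻¹' {y}).encard

/-- Minimal stretching `l(A) = min_{|h|=1} |A h|` of a linear map. -/
def minStretch {n : ℕ} (A : Eucl n →L[ℝ] Eucl n) : ℝ :=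
  sInf ((fun h => ‖A h‖) '' Metric.sphere (0 : Eucl n) 1)

/-- The `p`-inner dilatation `K_{I,p}(x,f)`. -/
def innerDilat {n : ℕ} (f : Eucl n → Eucl n) (p : ℝ) (x : Eucl n) : ℝ≥0∞ :=
  if DifferentiableAt ℝ f x then
    if jacDet f x ≠ 0 then
      ENNReal.ofReal (|jacDet f x| / (minStretch (fderiv ℝ f x)) ^ p)
    else if fderiv ℝ f x = 0 then 1 else ⊤
  else ⊤

/-- `K_{I,p}(·,f) ∈ L¹_loc(D)`. -/
def DilatLocIntegrable {n : ℕ} (f : Eucl n → Eucl n) (D : Set (Eucl n)) (p : ℝ) : Prop :=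
  ∀ K ⊆ D, IsCompact K → ∫⁻ x in K, innerDilat f p x < ⊤

/-- Lusin's `N`-property on `D`. -/
def LusinN {n : ℕ} (f : Eucl n → Eucl n) (D : Set (Eucl n)) : Prop :=
  ∀ S ⊆ D, volume S = 0 → volume (f '' S) = 0

/-- Lusin's `N⁻¹`-property on `D`. -/
def LusinNInv {n : ℕ} (f : Eucl n → Eucl n) (D : Set (Eucl n)) : Prop :=
  ∀ S : Set (Eucl n), volume S = 0 → volume (D ∩ f ⁻¹' S) = 0

/-- Local Sobolev class `W^{1,p}_loc(D)` (via the distributional definition: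
there is a locally `L^p` weak differential, tested by integration by parts
against smooth compactly supported functions). -/
def MemW1pLocOn {n : ℕ} (f : Eucl n → Eucl n) (D : Set (Eucl n)) (p : ℝ) : Prop :=
  ∃ Df : Eucl n → (Eucl n →L[ℝ] Eucl n),
    MeasureTheory.LocallyIntegrableOn f D volume ∧
    AEStronglyMeasurable Df (volume.restrict D) ∧
    (∀ K ⊆ D, IsCompact K → ∫⁻ x in K, ENNReal.ofReal (‖Df x‖) ^ p < ⊤) ∧
    ∀ φ : Eucl n → ℝ, ContDiff ℝ (⊤ : ℕ∞) φ → HasCompactSupport φ → tsupport φ ⊆ D →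
      ∀ v : Eucl n,
        ∫ x in D, (fderiv ℝ φ x v) • f x = - ∫ x in D, φ x • (Df x v)

/-- Absolute continuity of `g` on a set `s ⊆ ℝ` (ε–δ definition over finite
collections of nonoverlapping intervals with endpoints in `s`). -/
def AbsContOn {n : ℕ} (g : ℝ → Eucl n) (s : Set ℝ) : Prop :=
  ∀ ε > (0 : ℝ), ∃ δ > (0 : ℝ), ∀ (k : ℕ) (u v : Fin k → ℝ),
    (∀ i, u i ∈ s ∧ v i ∈ s ∧ u i ≤ v i) →
    (∀ i j, i ≠ j → Disjoint (Set.Ioo (u i) (v i)) (Set.Ioo (u j) (v j))) →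
    (∑ i, (v i - u i)) < δ →
    (∑ i, ‖g (v i) - g (u i)‖) < ε

/-- `f` has the `L²_p`-property: for `p`-a.e. curve `γ̃` in `f(D)` every
lifting `γ` of `γ̃` is locally rectifiable and the length-correspondence
function `L_{γ,f}` has the `N⁻¹`-property. -/
def HasL2pProperty {n : ℕ} (f : Eucl n → Eucl n) (D : Set (Eucl n)) (p : ℝ) : Prop :=
  ∃ Γ₀ : Set (CurveIn n),
    (∀ β ∈ Γ₀, β.InSet (f '' D)) ∧ pModule p Γ₀ = 0 ∧
    ∀ γt : CurveIn n, γt.InSet (f '' D) → γt ∉ Γ₀ →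
      ∀ γ : CurveIn n, γ.InSet D → γ.I = γt.I →
        (∀ t ∈ γ.I, f (γ.toFun t) = γt.toFun t) →
        γ.LocRect ∧
        ∀ t₀ ∈ γ.I, ∀ L : ℝ → ℝ,
          MonotoneOn L ((fun t => variationOnFromTo γ.toFun γ.I t₀ t) '' γ.I) →
          (∀ t ∈ γ.I, L (variationOnFromTo γ.toFun γ.I t₀ t)
              = variationOnFromTo γt.toFun γt.I t₀ t) →
          ∀ S : Set ℝ, volume S = 0 →
            volume (((fun t => variationOnFromTo γ.toFun γ.I t₀ t) '' γ.I) ∩ L ⁻¹' S) = 0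

section VariationHelpers

variable {X : Type*} [PseudoMetricSpace X]

lemma variationOnFromTo_subset {g : ℝ → X} {s : Set ℝ} {c d u v : ℝ}
    (hs : Icc c d ⊆ s) (hu : u ∈ Icc c d) (hv : v ∈ Icc c d) :
    variationOnFromTo g s u v = variationOnFromTo g (Icc c d) u v := by
  have key : ∀ x y : ℝ, x ∈ Icc c d → y ∈ Icc c d →
      s ∩ Icc x y = Icc c d ∩ Icc x y := by
    intro x y hx hy
    have h1 : Icc x y ⊆ Icc c d := Icc_subset_Icc hx.1 hy.2
    rw [inter_eq_self_of_subset_right (h1.trans hs), inter_eq_self_of_subset_right h1]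
  rcases le_total u v with h | h
  · rw [variationOnFromTo.eq_of_le g s h, variationOnFromTo.eq_of_le g _ h, key u v hu hv]
  · rw [variationOnFromTo.eq_of_ge g s h, variationOnFromTo.eq_of_ge g _ h, key v u hv hu]

lemma varFT_sub {g : ℝ → X} {c d : ℝ} (hLBV : LocallyBoundedVariationOn g (Icc c d))
    {s t : ℝ} (hs : s ∈ Icc c d) (ht : t ∈ Icc c d) (hst : s ≤ t) :
    variationOnFromTo g (Icc c d) c t - variationOnFromTo g (Icc c d) c s
      = (eVariationOn g (Icc s t)).toReal := by
  have hcd : c ≤ d := hs.1.trans hs.2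
  have hadd := variationOnFromTo.add hLBV (left_mem_Icc.mpr hcd) hs ht
  have h2 : variationOnFromTo g (Icc c d) s t
      = (eVariationOn g (Icc c d ∩ Icc s t)).toReal := variationOnFromTo.eq_of_le g _ hst
  rw [inter_eq_self_of_subset_right (Icc_subset_Icc hs.1 ht.2)] at h2
  linarith

lemma evar_small_right {g : ℝ → X} {a b : ℝ}
    (hg : ContinuousOn g (Icc a b)) (hfin : eVariationOn g (Icc a b) ≠ ⊤)
    {t₀ : ℝ} (ht₀ : t₀ ∈ Ico a b) {ε : ℝ≥0∞} (hε : ε ≠ 0) (hεtop : ε ≠ ⊤) :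
    ∃ t₁ ∈ Ioc t₀ b, eVariationOn g (Icc t₀ t₁) ≤ ε := by
  by_contra hcon
  push_neg at hcon
  set e4 : ℝ≥0∞ := ε / 2 / 2 with he4
  have he4top : e4 ≠ ⊤ := by
    simp only [he4]
    exact (ENNReal.div_lt_top (ENNReal.div_lt_top hεtop (by norm_num)).ne (by norm_num)).ne
  have he40 : e4 ≠ 0 := by
    simp only [he4]
    simp [ENNReal.div_eq_zero_iff, hε]
  have hc := hg t₀ (Ico_subset_Icc_self ht₀)
  rw [Metric.continuousWithinAt_iff] at hc
  obtain ⟨δ, hδ, hball⟩ := hc e4.toReal (ENNReal.toReal_pos he40 he4top)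
  set t₁ := min b (t₀ + δ / 2) with ht₁def
  have ht₀t₁ : t₀ < t₁ := lt_min ht₀.2 (by linarith)
  have ht₁b : t₁ ≤ b := min_le_left _ _
  have hedist : ∀ s ∈ Icc t₀ t₁, edist (g s) (g t₀) ≤ e4 := by
    intro s hs
    have hsab : s ∈ Icc a b := ⟨ht₀.1.trans hs.1, hs.2.trans ht₁b⟩
    have hd : dist s t₀ < δ := by
      rw [Real.dist_eq, abs_of_nonneg (by linarith [hs.1])]
      have h2 : s ≤ t₀ + δ/2 := hs.2.trans (min_le_right _ _)
      linarith
    have hb2 := hball hsab hd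
    rw [edist_dist]
    calc ENNReal.ofReal (dist (g s) (g t₀)) ≤ ENNReal.ofReal e4.toReal :=
          ENNReal.ofReal_le_ofReal hb2.le
    _ = e4 := ENNReal.ofReal_toReal he4top
  have hVfin : eVariationOn g (Icc t₀ t₁) ≠ ⊤ :=
    ne_top_of_le_ne_top hfin (eVariationOn.mono g (Icc_subset_Icc ht₀.1 ht₁b))
  have hεV : ε < eVariationOn g (Icc t₀ t₁) := hcon t₁ ⟨ht₀t₁, ht₁b⟩
  have hV0 : eVariationOn g (Icc t₀ t₁) ≠ 0 :=
    fun h => by simp [h] at hεV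
  have hsub : eVariationOn g (Icc t₀ t₁) - e4 < eVariationOn g (Icc t₀ t₁) :=
    ENNReal.sub_lt_self hVfin hV0 he40
  obtain ⟨⟨m, u, humono, humem⟩, hgt⟩ := lt_iSup_iff.mp
    (show eVariationOn g (Icc t₀ t₁) - e4
        < ⨆ p : ℕ × { u : ℕ → ℝ // Monotone u ∧ ∀ i, u i ∈ Icc t₀ t₁ },
          ∑ i ∈ Finset.range p.1, edist (g ((p.2 : ℕ → ℝ) (i + 1))) (g ((p.2 : ℕ → ℝ) i))
      from hsub)
  by_cases hex : ∃ j, j ≤ m ∧ t₀ < u j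
  · set j₀ := Nat.find hex with hj₀def
    obtain ⟨hj₀m, hj₀t⟩ := Nat.find_spec hex
    have hjlt : ∀ j, j < j₀ → u j = t₀ := by
      intro j hj
      have h1 := Nat.find_min hex hj
      push_neg at h1
      have hjm : j ≤ m := le_trans hj.le hj₀m
      exact le_antisymm (h1 hjm) (humem j).1
    have hsplit := Finset.sum_range_add_sum_Ico
      (fun i => edist (g (u (i + 1))) (g (u i))) hj₀m
    have bound1 : ∑ i ∈ Finset.range j₀, edist (g (u (i + 1))) (g (u i)) ≤ e4 := by
      have hterm : ∀ i ∈ Finset.range j₀, edist (g (u (i + 1))) (g (u i))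
          ≤ if i + 1 = j₀ then e4 else 0 := by
        intro i hi
        rw [Finset.mem_range] at hi
        rw [hjlt i hi]
        by_cases h : i + 1 = j₀
        · rw [if_pos h]; exact hedist _ (humem (i + 1))
        · rw [if_neg h, hjlt (i + 1) (lt_of_le_of_ne (Nat.succ_le_of_lt hi) h)]
          simp
      calc ∑ i ∈ Finset.range j₀, edist (g (u (i + 1))) (g (u i))
          ≤ ∑ i ∈ Finset.range j₀, (if i + 1 = j₀ then e4 else 0) :=
            Finset.sum_le_sum hterm
      _ ≤ e4 := by
          rcases Nat.eq_zero_or_pos j₀ with h0 | hpos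
          · simp [h0]
          · rw [Finset.sum_eq_single_of_mem (j₀ - 1)
              (Finset.mem_range.mpr (by omega))
              (fun b _ hb => if_neg (fun h => hb (by omega)))]
            rw [if_pos (by omega)]
    have bound2 : ∑ i ∈ Finset.Ico j₀ m, edist (g (u (i + 1))) (g (u i))
        ≤ eVariationOn g (Icc (u j₀) t₁) := by
      rw [Finset.sum_Ico_eq_sum_range]
      exact eVariationOn.sum_le (u := fun i => u (j₀ + i)) (f := g) (n := m - j₀)
        (fun i j h => humono (by omega))
        (fun i => ⟨humono (Nat.le_add_right j₀ i), (humem _).2⟩)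
    have hic := eVariationOn.Icc_add_Icc (s := (univ : Set ℝ)) g (le_of_lt hj₀t)
      (humem j₀).2 (mem_univ (u j₀))
    simp only [univ_inter] at hic
    have hY : ε < eVariationOn g (Icc t₀ (u j₀)) :=
      hcon (u j₀) ⟨hj₀t, (humem j₀).2.trans ht₁b⟩
    have hZfin : eVariationOn g (Icc (u j₀) t₁) ≠ ⊤ := by
      refine ne_top_of_le_ne_top hVfin ?_
      rw [← hic]; exact le_add_self
    have he4V : e4 ≤ eVariationOn g (Icc t₀ t₁) :=
      le_trans (le_trans ENNReal.half_le_self ENNReal.half_le_self) hεV.le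
    have hlt : eVariationOn g (Icc t₀ t₁) < (e4 + eVariationOn g (Icc (u j₀) t₁)) + e4 := by
      rw [← ENNReal.sub_lt_iff_lt_right he4top he4V]
      calc eVariationOn g (Icc t₀ t₁) - e4
          < ∑ i ∈ Finset.range m, edist (g (u (i + 1))) (g (u i)) := hgt
      _ = _ + _ := hsplit.symm
      _ ≤ e4 + eVariationOn g (Icc (u j₀) t₁) := add_le_add bound1 bound2
    rw [← hic] at hlt
    have hlt2 : eVariationOn g (Icc (u j₀) t₁) + eVariationOn g (Icc t₀ (u j₀))
        < eVariationOn g (Icc (u j₀) t₁) + ε / 2 := by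
      calc eVariationOn g (Icc (u j₀) t₁) + eVariationOn g (Icc t₀ (u j₀))
          = eVariationOn g (Icc t₀ (u j₀)) + eVariationOn g (Icc (u j₀) t₁) := add_comm _ _
      _ < (e4 + eVariationOn g (Icc (u j₀) t₁)) + e4 := hlt
      _ = eVariationOn g (Icc (u j₀) t₁) + (e4 + e4) := by ring
      _ = eVariationOn g (Icc (u j₀) t₁) + ε / 2 := by rw [he4, ENNReal.add_halves]
    have hY2 : eVariationOn g (Icc t₀ (u j₀)) < ε / 2 :=
      (ENNReal.add_lt_add_iff_left hZfin).mp hlt2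
    exact absurd (hY.trans hY2) (not_lt.mpr ENNReal.half_le_self)
  · have hz : ∑ i ∈ Finset.range m, edist (g (u (i + 1))) (g (u i)) = 0 := by
      refine Finset.sum_eq_zero fun i hi => ?_
      rw [Finset.mem_range] at hi
      push_neg at hex
      have h1 : u i = t₀ := le_antisymm (hex i (by omega)) (humem i).1
      have h2 : u (i + 1) = t₀ := le_antisymm (hex (i + 1) (by omega)) (humem (i + 1)).1
      rw [h1, h2]; simp
    rw [hz] at hgt
    simp at hgt

end VariationHelpers
section VariationHelpers2

variable {X : Type*} [PseudoMetricSpace X]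

lemma evar_small_left {g : ℝ → X} {a b : ℝ}
    (hg : ContinuousOn g (Icc a b)) (hfin : eVariationOn g (Icc a b) ≠ ⊤)
    {t₀ : ℝ} (ht₀ : t₀ ∈ Ioc a b) {ε : ℝ≥0∞} (hε : ε ≠ 0) (hεtop : ε ≠ ⊤) :
    ∃ t₁ ∈ Ico a t₀, eVariationOn g (Icc t₁ t₀) ≤ ε := by
  have hanti : ∀ u v : ℝ, AntitoneOn (fun x : ℝ => -x) (Icc u v) :=
    fun u v x _ y _ h => neg_le_neg h
  have himg : ∀ u v : ℝ, (fun x : ℝ => -x) '' Icc u v = Icc (-v) (-u) := by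
    intro u v
    ext x
    simp only [mem_image, mem_Icc]
    constructor
    · rintro ⟨y, hy, rfl⟩; constructor <;> linarith [hy.1, hy.2]
    · intro hx; exact ⟨-x, ⟨by linarith [hx.2], by linarith [hx.1]⟩, by ring⟩
  have hcomp : ∀ u v : ℝ, eVariationOn (fun x => g (-x)) (Icc u v)
      = eVariationOn g (Icc (-v) (-u)) := by
    intro u v
    have := eVariationOn.comp_eq_of_antitoneOn g (fun x : ℝ => -x) (hanti u v)
    rw [himg u v] at this
    exact this
  have hgneg : ContinuousOn (fun x => g (-x)) (Icc (-b) (-a)) := by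
    apply hg.comp (continuous_neg.continuousOn)
    intro x hx
    simp only [mem_Icc] at hx ⊢
    constructor <;> linarith [hx.1, hx.2]
  have hfin' : eVariationOn (fun x => g (-x)) (Icc (-b) (-a)) ≠ ⊤ := by
    rw [hcomp]; simpa using hfin
  have ht₀' : -t₀ ∈ Ico (-b) (-a) := ⟨neg_le_neg ht₀.2, neg_lt_neg ht₀.1⟩
  obtain ⟨t₁', ht₁', hvar⟩ := evar_small_right hgneg hfin' ht₀' hε hεtop
  refine ⟨-t₁', ⟨by linarith [ht₁'.2], by linarith [ht₁'.1]⟩, ?_⟩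
  rw [hcomp] at hvar
  simpa using hvar

lemma variation_continuousOn {g : ℝ → X} {a b : ℝ}
    (hg : ContinuousOn g (Icc a b)) (hfin : eVariationOn g (Icc a b) ≠ ⊤) :
    ContinuousOn (fun t => variationOnFromTo g (Icc a b) a t) (Icc a b) := by
  have hLBV : LocallyBoundedVariationOn g (Icc a b) :=
    BoundedVariationOn.locallyBoundedVariationOn hfin
  intro t₀ ht₀
  rw [Metric.continuousWithinAt_iff]
  intro ε hε
  have hkey : ∀ y ∈ Icc a b, ∀ t₁ t₂ : ℝ, t₁ ≤ y → y ≤ t₂ → t₁ ≤ t₀ → t₀ ≤ t₂ →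
      eVariationOn g (Icc t₁ t₂) ≤ ENNReal.ofReal (ε / 2) →
      dist (variationOnFromTo g (Icc a b) a y) (variationOnFromTo g (Icc a b) a t₀) < ε := by
    intro y hy t₁ t₂ h1 h2 h3 h4 hvar
    have hsubfin : eVariationOn g (Icc (min y t₀) (max y t₀)) ≤ ENNReal.ofReal (ε / 2) := by
      refine le_trans (eVariationOn.mono g ?_) hvar
      apply Icc_subset_Icc (le_min h1 h3) (max_le h2 h4)
    have heq : variationOnFromTo g (Icc a b) a y - variationOnFromTo g (Icc a b) a t₀
        = variationOnFromTo g (Icc a b) t₀ y := by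
      have := variationOnFromTo.add hLBV (left_mem_Icc.mpr (ht₀.1.trans ht₀.2)) ht₀ hy
      linarith
    rw [Real.dist_eq, heq]
    have habs : |variationOnFromTo g (Icc a b) t₀ y|
        = (eVariationOn g (Icc a b ∩ Icc (min y t₀) (max y t₀))).toReal := by
      rcases le_total t₀ y with h | h
      · rw [abs_of_nonneg (variationOnFromTo.nonneg_of_le g _ h),
          variationOnFromTo.eq_of_le g _ h, min_eq_right h, max_eq_left h]
      · rw [abs_of_nonpos (variationOnFromTo.nonpos_of_ge g _ h),
          variationOnFromTo.eq_of_ge g _ h, min_eq_left h, max_eq_right h]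
        simp
    rw [habs]
    have : eVariationOn g (Icc a b ∩ Icc (min y t₀) (max y t₀)) ≤ ENNReal.ofReal (ε / 2) :=
      le_trans (eVariationOn.mono g inter_subset_right) hsubfin
    have := ENNReal.toReal_le_of_le_ofReal (by linarith) this
    linarith
  -- right bound
  have hright : ∃ dP > (0:ℝ), ∀ y ∈ Icc a b, t₀ ≤ y → y - t₀ < dP →
      dist (variationOnFromTo g (Icc a b) a y) (variationOnFromTo g (Icc a b) a t₀) < ε := by
    by_cases hb : t₀ < b
    · obtain ⟨t₁, ht₁, hvar⟩ := evar_small_right (ε := ENNReal.ofReal (ε / 2)) hg hfin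
        ⟨ht₀.1, hb⟩ (ENNReal.ofReal_pos.mpr (by linarith)).ne' ENNReal.ofReal_ne_top
      refine ⟨t₁ - t₀, by linarith [ht₁.1], fun y hy hty hlt => ?_⟩
      exact hkey y hy t₀ t₁ hty (by linarith) le_rfl ht₁.1.le hvar
    · refine ⟨1, one_pos, fun y hy hty _ => ?_⟩
      have : y = t₀ := le_antisymm (hy.2.trans (not_lt.mp hb)) hty
      rw [this]
      simpa using hε
  have hleft : ∃ dM > (0:ℝ), ∀ y ∈ Icc a b, y ≤ t₀ → t₀ - y < dM →
      dist (variationOnFromTo g (Icc a b) a y) (variationOnFromTo g (Icc a b) a t₀) < ε := by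
    by_cases ha : a < t₀
    · obtain ⟨t₁, ht₁, hvar⟩ := evar_small_left (ε := ENNReal.ofReal (ε / 2)) hg hfin
        ⟨ha, ht₀.2⟩ (ENNReal.ofReal_pos.mpr (by linarith)).ne' ENNReal.ofReal_ne_top
      refine ⟨t₀ - t₁, by linarith [ht₁.2], fun y hy hty hlt => ?_⟩
      exact hkey y hy t₁ t₀ (by linarith) hty ht₁.2.le le_rfl hvar
    · refine ⟨1, one_pos, fun y hy hty _ => ?_⟩
      have : y = t₀ := le_antisymm hty ((not_lt.mp ha).trans hy.1)
      rw [this]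
      simpa using hε
  obtain ⟨dP, hdP, hR⟩ := hright
  obtain ⟨dM, hdM, hL⟩ := hleft
  refine ⟨min dP dM, lt_min hdP hdM, fun {y} hy hdy => ?_⟩
  rcases le_total t₀ y with h | h
  · refine hR y hy h ?_
    rw [Real.dist_eq, abs_of_nonneg (by linarith)] at hdy
    exact hdy.trans_le (min_le_left _ _)
  · refine hL y hy h ?_
    rw [Real.dist_eq, abs_of_nonpos (by linarith)] at hdy
    have := hdy.trans_le (min_le_right _ _)
    linarith

lemma varFT_image_Icc {g : ℝ → X} {c d : ℝ} (hcd : c ≤ d)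
    (hg : ContinuousOn g (Icc c d)) (hfin : eVariationOn g (Icc c d) ≠ ⊤) :
    (fun t => variationOnFromTo g (Icc c d) c t) '' Icc c d
      = Icc 0 (variationOnFromTo g (Icc c d) c d) := by
  have hLBV : LocallyBoundedVariationOn g (Icc c d) :=
    BoundedVariationOn.locallyBoundedVariationOn hfin
  have hmono := variationOnFromTo.monotoneOn hLBV (left_mem_Icc.mpr hcd)
  apply subset_antisymm
  · rintro x ⟨t, ht, rfl⟩
    exact ⟨variationOnFromTo.nonneg_of_le g _ ht.1,
      hmono ht (right_mem_Icc.mpr hcd) ht.2⟩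
  · have h := intermediate_value_Icc hcd (variation_continuousOn hg hfin)
    rwa [variationOnFromTo.self] at h

end VariationHelpers2
section MiscHelpers

variable {X : Type*} [PseudoMetricSpace X]

lemma transfer_exists {α β : ℝ → ℝ} {c d : ℝ} (hcd : c ≤ d)
    (hα : MonotoneOn α (Icc c d)) (hβ : MonotoneOn β (Icc c d))
    (hβ0 : ∀ t ∈ Icc c d, 0 ≤ β t)
    (hflat : ∀ s t, s ∈ Icc c d → t ∈ Icc c d → s ≤ t → α s = α t → β s = β t) :
    ∃ T : ℝ → ℝ, Monotone T ∧ ∀ t ∈ Icc c d, T (α t) = β t := by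
  refine ⟨fun x => sSup (insert 0 (β '' {t | t ∈ Icc c d ∧ α t ≤ x})), ?_, ?_⟩
  · intro x y hxy
    apply csSup_le_csSup
    · refine ⟨max (β d) 0, ?_⟩
      rintro z (rfl | ⟨t, ⟨ht, _⟩, rfl⟩)
      · exact le_max_right _ _
      · exact le_max_of_le_left (hβ ht (right_mem_Icc.mpr hcd) ht.2)
    · exact ⟨0, mem_insert _ _⟩
    · apply insert_subset_insert
      apply image_mono
      intro t ⟨ht1, ht2⟩
      exact ⟨ht1, ht2.trans hxy⟩
  · intro t ht
    apply IsGreatest.csSup_eq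
    constructor
    · exact Or.inr ⟨t, ⟨ht, le_rfl⟩, rfl⟩
    · rintro z (rfl | ⟨s, ⟨hs, hsle⟩, rfl⟩)
      · exact hβ0 t ht
      · rcases le_total s t with h | h
        · exact hβ hs ht h
        · exact le_of_eq (hflat t s ht hs h (le_antisymm (hα ht hs h) hsle)).symm

lemma eq_of_eVariationOn_zero {Y : Type*} [EMetricSpace Y] {g : ℝ → Y} {s : Set ℝ}
    (h : eVariationOn g s = 0) {x y : ℝ} (hx : x ∈ s) (hy : y ∈ s) : g x = g y := by
  have := eVariationOn.edist_le g hx hy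
  rw [h, le_zero_iff] at this
  exact edist_eq_zero.mp this

lemma dist_le_evar_toReal {g : ℝ → X} {s t : ℝ} (hst : s ≤ t)
    (hfin : eVariationOn g (Icc s t) ≠ ⊤) :
    dist (g s) (g t) ≤ (eVariationOn g (Icc s t)).toReal := by
  have h := eVariationOn.edist_le g (left_mem_Icc.mpr hst) (right_mem_Icc.mpr hst)
  rw [edist_dist] at h
  calc dist (g s) (g t) = (ENNReal.ofReal (dist (g s) (g t))).toReal := by
        rw [ENNReal.toReal_ofReal dist_nonneg]
  _ ≤ (eVariationOn g (Icc s t)).toReal := by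
        apply ENNReal.toReal_mono hfin h

lemma variationOnFromTo_zero_of_const {g : ℝ → X} {s : Set ℝ}
    (h : (g '' s).Subsingleton) (a b : ℝ) : variationOnFromTo g s a b = 0 := by
  have key : ∀ u v : ℝ, eVariationOn g (s ∩ Icc u v) = 0 := by
    intro u v
    exact eVariationOn.constant_on (h.anti (image_mono inter_subset_left))
  rcases le_total a b with hab | hab
  · rw [variationOnFromTo.eq_of_le g s hab, key]; simp
  · rw [variationOnFromTo.eq_of_ge g s hab, key]; simp

lemma exists_upper_seq (I : Set ℝ) (hne : I.Nonempty) :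
    ∃ d : ℕ → ℝ, (∀ k, d k ∈ I) ∧ ∀ t ∈ I, ∃ k, t ≤ d k := by
  by_cases hbd : BddAbove I
  · by_cases hs : sSup I ∈ I
    · exact ⟨fun _ => sSup I, fun _ => hs, fun t ht => ⟨0, le_csSup hbd ht⟩⟩
    · have hex : ∀ k : ℕ, ∃ y ∈ I, sSup I - 1 / (k + 1) < y := by
        intro k
        apply exists_lt_of_lt_csSup hne
        have : (0:ℝ) < 1 / (k + 1) := by positivity
        linarith
      choose d hd hlt using hex
      refine ⟨d, hd, fun t ht => ?_⟩
      have htlt : t < sSup I := lt_of_le_of_ne (le_csSup hbd ht) (fun h => hs (h ▸ ht))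
      obtain ⟨k, hk⟩ := exists_nat_one_div_lt (show (0:ℝ) < sSup I - t by linarith)
      exact ⟨k, by have := hlt k; linarith⟩
  · rw [not_bddAbove_iff] at hbd
    have hex : ∀ k : ℕ, ∃ y ∈ I, (k : ℝ) < y := fun k => hbd k
    choose d hd hlt using hex
    refine ⟨d, hd, fun t ht => ?_⟩
    obtain ⟨k, hk⟩ := exists_nat_ge t
    exact ⟨k, le_trans hk (hlt k).le⟩

lemma exists_cover_seq {I : Set ℝ} {t₀ : ℝ} (ht₀ : t₀ ∈ I) :
    ∃ c d : ℕ → ℝ, (∀ k, c k ∈ I ∧ d k ∈ I ∧ c k ≤ t₀ ∧ t₀ ≤ d k) ∧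
      ∀ t ∈ I, ∃ k, c k ≤ t ∧ t ≤ d k := by
  obtain ⟨d, hd, hdcov⟩ := exists_upper_seq I ⟨t₀, ht₀⟩
  obtain ⟨c', hc', hccov⟩ := exists_upper_seq ((fun x : ℝ => -x) '' I) ⟨-t₀, ⟨t₀, ht₀, rfl⟩⟩
  have hcmem : ∀ k, -(c' k) ∈ I := by
    intro k
    obtain ⟨y, hy, hy2⟩ := hc' k
    simp only [] at hy2
    rwa [show -(c' k) = y by linarith [hy2]]
  set e : ℕ ≃ ℕ × ℕ := (Denumerable.eqv (ℕ × ℕ)).symm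
  refine ⟨fun k => min (-(c' (e k).1)) t₀, fun k => max (d (e k).2) t₀, fun k => ?_, ?_⟩
  · refine ⟨?_, ?_, min_le_right _ _, le_max_right _ _⟩
    · show min (-(c' (e k).1)) t₀ ∈ I
      rcases min_cases (-(c' (e k).1)) t₀ with ⟨h, _⟩ | ⟨h, _⟩
      · rw [h]; exact hcmem _
      · rw [h]; exact ht₀
    · show max (d (e k).2) t₀ ∈ I
      rcases max_cases (d (e k).2) t₀ with ⟨h, _⟩ | ⟨h, _⟩
      · rw [h]; exact hd _
      · rw [h]; exact ht₀
  · intro t ht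
    obtain ⟨j, hj⟩ := hdcov t ht
    obtain ⟨i, hi⟩ := hccov (-t) ⟨t, ht, rfl⟩
    obtain ⟨k, hk⟩ := e.surjective (i, j)
    refine ⟨k, ?_, ?_⟩
    · show min (-(c' (e k).1)) t₀ ≤ t
      rw [hk]
      exact min_le_of_left_le (by linarith [hi])
    · show t ≤ max (d (e k).2) t₀
      rw [hk]
      exact le_max_of_le_left (by simpa using hj)

end MiscHelpers
section L12

lemma Ioo_disjoint_of_le {a b c d : ℝ} (h : b ≤ c) : Disjoint (Ioo a b) (Ioo c d) := by
  rw [Set.disjoint_left]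
  intro x hx hx'
  exact absurd (hx.2.trans_le h) (not_lt.mpr hx'.1.le)

lemma Ioo_subset_Ioo_of_Icc {u v x y : ℝ} (hx : x ∈ Icc u v) (hy : y ∈ Icc u v) :
    Ioo x y ⊆ Ioo u v :=
  fun z hz => ⟨lt_of_le_of_lt hx.1 hz.1, lt_of_lt_of_le hz.2 hy.2⟩

lemma disjoint_order {u v u' v' : ℝ} (h1 : u < v) (h2 : u' < v')
    (hd : Disjoint (Ioo u v) (Ioo u' v')) : v ≤ u' ∨ v' ≤ u := by
  by_contra hcon
  push_neg at hcon
  obtain ⟨hA, hB⟩ := hcon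
  have : max u u' < min v v' := by
    rcases max_cases u u' with ⟨h, _⟩ | ⟨h, _⟩ <;> rcases min_cases v v' with ⟨h', _⟩ | ⟨h', _⟩ <;>
      rw [h, h'] <;> linarith
  obtain ⟨z, hz1, hz2⟩ := exists_between this
  exact Set.disjoint_left.mp hd
    ⟨(le_max_left _ _).trans_lt hz1, hz2.trans_le (min_le_left _ _)⟩
    ⟨(le_max_right _ _).trans_lt hz1, hz2.trans_le (min_le_right _ _)⟩

lemma flats_countable {M : ℝ → ℝ} (hM : Monotone M) :
    {y : ℝ | ∃ x₁ x₂ : ℝ, x₁ < x₂ ∧ M x₁ = y ∧ M x₂ = y}.Countable := by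
  apply Set.Countable.mono ?_ (countable_iUnion fun q : ℚ => countable_singleton (M q))
  rintro y ⟨x₁, x₂, hlt, h1, h2⟩
  obtain ⟨q, hq1, hq2⟩ := exists_rat_btwn hlt
  refine mem_iUnion.mpr ⟨q, ?_⟩
  have : M q = y := le_antisymm (h2 ▸ hM hq2.le) (h1 ▸ hM hq1.le)
  simp [this]

lemma squeeze_measurable {a b : ℝ} {s : Set ℝ} (h1 : Ioo a b ⊆ s) (h2 : s ⊆ Icc a b)
    (hab : a ≤ b) : MeasurableSet s := by
  have : s = Ioo a b ∪ (s \ Ioo a b) := by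
    rw [union_diff_cancel' (le_refl _) h1]
  rw [this]
  apply measurableSet_Ioo.union
  apply Set.Countable.measurableSet
  apply Set.Countable.mono ?_ ((countable_singleton a).insert b)
  intro x hx
  have := h2 hx.1
  have hno := hx.2
  simp only [mem_Ioo, not_and_or, not_lt] at hno
  rcases hno with h | h
  · right; exact le_antisymm h this.1 ▸ rfl
  · left; exact (le_antisymm this.2 h) ▸ rfl

lemma monotone_lusinNinv_AC {M : ℝ → ℝ} (hM : Monotone M) {c d : ℝ} (hcd : c ≤ d)
    (himg : ∀ y, M c ≤ y → y ≤ M d → ∃ x ∈ Icc c d, M x = y)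
    (hN : ∀ S : Set ℝ, volume S = 0 → volume (M '' (Icc c d ∩ S)) = 0) :
    ∀ ε > (0:ℝ), ∃ δ > (0:ℝ), ∀ (k : ℕ) (u v : Fin k → ℝ),
      (∀ i, u i ∈ Icc c d ∧ v i ∈ Icc c d ∧ u i ≤ v i) →
      (∀ i j, i ≠ j → Disjoint (Ioo (u i) (v i)) (Ioo (u j) (v j))) →
      (∑ i, (v i - u i)) < δ →
      (∑ i, (M (v i) - M (u i))) < ε := by
  intro ε hε
  by_contra hcon
  push_neg at hcon
  have hfam : ∀ m : ℕ, ∃ (k : ℕ) (u v : Fin k → ℝ),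
      (∀ i, u i ∈ Icc c d ∧ v i ∈ Icc c d ∧ u i ≤ v i) ∧
      (∀ i j, i ≠ j → Disjoint (Ioo (u i) (v i)) (Ioo (u j) (v j))) ∧
      (∑ i, (v i - u i)) < (1/2 : ℝ)^m ∧ ε ≤ ∑ i, (M (v i) - M (u i)) := by
    intro m
    obtain ⟨k, u, v, h1, h2, h3, h4⟩ := hcon ((1/2:ℝ)^m) (by positivity)
    exact ⟨k, u, v, h1, h2, h3, h4⟩
  choose k u v hmem hdisj hlen hMsum using hfam
  set A : ℕ → Set ℝ := fun m => ⋃ i : Fin (k m), Icc (u m i) (v m i) with hA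
  set Dm : ℕ → Set ℝ := fun m => ⋃ i : Fin (k m), M '' Icc (u m i) (v m i) with hDm
  -- image squeeze
  have hsq1 : ∀ m i, Ioo (M (u m i)) (M (v m i)) ⊆ M '' Icc (u m i) (v m i) := by
    intro m i y hy
    obtain ⟨x, hx, hMx⟩ := himg y
      (le_trans (hM (hmem m i).1.1) hy.1.le) (hy.2.le.trans (hM (hmem m i).2.1.2))
    refine ⟨x, ⟨?_, ?_⟩, hMx⟩
    · by_contra h
      exact absurd (hMx ▸ hM (le_of_lt (not_le.mp h))) (not_le.mpr hy.1)
    · by_contra h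
      exact absurd (hMx ▸ hM (le_of_lt (not_le.mp h))) (not_le.mpr hy.2)
  have hsq2 : ∀ m i, M '' Icc (u m i) (v m i) ⊆ Icc (M (u m i)) (M (v m i)) := by
    rintro m i y ⟨x, hx, rfl⟩
    exact ⟨hM hx.1, hM hx.2⟩
  have hDmeas : ∀ m, MeasurableSet (Dm m) := by
    intro m
    exact MeasurableSet.iUnion fun i =>
      squeeze_measurable (hsq1 m i) (hsq2 m i) (hM (hmem m i).2.2)
  have hAmeas : ∀ m, MeasurableSet (A m) :=
    fun m => MeasurableSet.iUnion fun i => measurableSet_Icc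
  -- lower bound on volume of Dm
  have hDvol : ∀ m, ENNReal.ofReal ε ≤ volume (Dm m) := by
    intro m
    have hdisj' : Pairwise (Function.onFun Disjoint fun i : Fin (k m) => Ioo (M (u m i)) (M (v m i))) := by
      intro i j hij
      by_cases hiv : u m i < v m i
      · by_cases hjv : u m j < v m j
        · rcases disjoint_order hiv hjv (hdisj m i j hij) with h | h
          · exact Ioo_disjoint_of_le (hM h)
          · exact (Ioo_disjoint_of_le (hM h)).symm
        · have : u m j = v m j := le_antisymm (hmem m j).2.2 (not_lt.mp hjv)
          simp [Function.onFun, this]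
      · have : u m i = v m i := le_antisymm (hmem m i).2.2 (not_lt.mp hiv)
        simp [Function.onFun, this]
    calc ENNReal.ofReal ε ≤ ENNReal.ofReal (∑ i, (M (v m i) - M (u m i))) :=
          ENNReal.ofReal_le_ofReal (hMsum m)
    _ = ∑ i, ENNReal.ofReal (M (v m i) - M (u m i)) :=
          ENNReal.ofReal_sum_of_nonneg fun i _ => sub_nonneg.mpr (hM (hmem m i).2.2)
    _ = ∑ i, volume (Ioo (M (u m i)) (M (v m i))) := by
          simp [Real.volume_Ioo]
    _ = volume (⋃ i, Ioo (M (u m i)) (M (v m i))) := by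
          rw [measure_iUnion hdisj' fun i => measurableSet_Ioo, tsum_fintype]
    _ ≤ volume (Dm m) := measure_mono (iUnion_mono fun i => hsq1 m i)
  -- Dm and A bounded
  have hDsub : ∀ m, Dm m ⊆ Icc (M c) (M d) := by
    rintro m x hx
    obtain ⟨i, hi⟩ := mem_iUnion.mp hx
    have := hsq2 m i hi
    exact ⟨le_trans (hM (hmem m i).1.1) this.1, this.2.trans (hM (hmem m i).2.1.2)⟩
  have hAsub : ∀ m, A m ⊆ Icc c d := by
    rintro m x hx
    obtain ⟨i, hi⟩ := mem_iUnion.mp hx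
    exact ⟨(hmem m i).1.1.trans hi.1, hi.2.trans (hmem m i).2.1.2⟩
  -- tail unions
  set G : ℕ → Set ℝ := fun N => ⋃ m, Dm (N + m) with hG
  have hGmeas : ∀ N, MeasurableSet (G N) := fun N => MeasurableSet.iUnion fun m => hDmeas _
  have hGanti : Antitone G := by
    intro N N' hNN' x hx
    obtain ⟨m, hm⟩ := mem_iUnion.mp hx
    exact mem_iUnion.mpr ⟨N' - N + m, by rwa [show N + (N' - N + m) = N' + m by omega]⟩
  have hGvol : ∀ N, ENNReal.ofReal ε ≤ volume (G N) := by
    intro N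
    refine le_trans (hDvol N) (measure_mono ?_)
    intro x hx
    exact mem_iUnion.mpr ⟨0, by simpa using hx⟩
  have hGfin : volume (G 0) ≠ ⊤ := by
    refine ne_top_of_le_ne_top ?_ (measure_mono (iUnion_subset fun m => hDsub _))
    rw [Real.volume_Icc]
    exact ENNReal.ofReal_ne_top
  have htend := tendsto_measure_iInter_atTop (μ := volume)
    (fun N => (hGmeas N).nullMeasurableSet) hGanti ⟨0, hGfin⟩
  have hGlim : ENNReal.ofReal ε ≤ volume (⋂ N, G N) :=
    ge_of_tendsto htend (Filter.Eventually.of_forall fun N => hGvol N)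
  -- the null set B
  set B : Set ℝ := ⋂ N, ⋃ m, A (N + m) with hB
  have hBnull : volume B = 0 := by
    have hbound : ∀ N : ℕ, volume B ≤ ENNReal.ofReal ((1/2:ℝ)^N) * 2 := by
      intro N
      calc volume B ≤ volume (⋃ m, A (N + m)) := measure_mono (iInter_subset _ N)
      _ ≤ ∑' m : ℕ, volume (A (N + m)) := measure_iUnion_le _
      _ ≤ ∑' m : ℕ, ENNReal.ofReal ((1/2:ℝ)^(N+m)) := by
          refine ENNReal.tsum_le_tsum fun m => ?_
          calc volume (A (N + m)) ≤ ∑' i : Fin (k (N+m)), volume (Icc (u (N+m) i) (v (N+m) i)) :=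
                measure_iUnion_le _
          _ = ∑ i : Fin (k (N+m)), ENNReal.ofReal (v (N+m) i - u (N+m) i) := by
                rw [tsum_fintype]; simp [Real.volume_Icc]
          _ = ENNReal.ofReal (∑ i, (v (N+m) i - u (N+m) i)) :=
                (ENNReal.ofReal_sum_of_nonneg fun i _ => sub_nonneg.mpr (hmem _ i).2.2).symm
          _ ≤ ENNReal.ofReal ((1/2:ℝ)^(N+m)) := ENNReal.ofReal_le_ofReal (hlen _).le
      _ = ∑' m : ℕ, ENNReal.ofReal ((1/2:ℝ)^N) * ENNReal.ofReal ((1/2:ℝ)^m) := by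
          congr 1; funext m
          rw [pow_add, ENNReal.ofReal_mul (by positivity)]
      _ = ENNReal.ofReal ((1/2:ℝ)^N) * ∑' m : ℕ, ENNReal.ofReal ((1/2:ℝ)^m) :=
          ENNReal.tsum_mul_left
      _ ≤ ENNReal.ofReal ((1/2:ℝ)^N) * 2 := by
          gcongr
          have h12 : ENNReal.ofReal ((1/2:ℝ)) = 2⁻¹ := by
            rw [ENNReal.ofReal_div_of_pos (by norm_num)]
            norm_num
          calc ∑' m : ℕ, ENNReal.ofReal ((1/2:ℝ)^m)
              = ∑' m : ℕ, (2⁻¹ : ℝ≥0∞)^m := by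
                congr 1; funext m
                rw [ENNReal.ofReal_pow (by norm_num), h12]
          _ = (1 - 2⁻¹)⁻¹ := ENNReal.tsum_geometric _
          _ ≤ 2 := by
                rw [ENNReal.one_sub_inv_two]
                norm_num
    have htend2 : Filter.Tendsto (fun N : ℕ => ENNReal.ofReal ((1/2:ℝ)^N) * 2)
        Filter.atTop (nhds 0) := by
      have h1 : Filter.Tendsto (fun N : ℕ => ((1/2:ℝ))^N) Filter.atTop (nhds 0) :=
        tendsto_pow_atTop_nhds_zero_of_lt_one (by norm_num) (by norm_num)
      have h2 := ENNReal.Tendsto.mul_const (ENNReal.tendsto_ofReal h1)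
        (Or.inr (by norm_num : (2:ℝ≥0∞) ≠ ⊤))
      simpa using h2
    have := ge_of_tendsto htend2 (Filter.Eventually.of_forall hbound)
    simpa using this
  -- flats
  set F : Set ℝ := {y : ℝ | ∃ x₁ x₂ : ℝ, x₁ < x₂ ∧ M x₁ = y ∧ M x₂ = y} with hF
  have hFnull : volume F = 0 := (flats_countable hM).measure_zero _
  -- main inclusion
  have hincl : (⋂ N, G N) ⊆ M '' (Icc c d ∩ B) ∪ F := by
    intro y hy
    by_cases hyF : y ∈ F
    · exact Or.inr hyF
    left
    have hx : ∀ N : ℕ, ∃ x, x ∈ Icc c d ∧ x ∈ (⋃ m, A (N + m)) ∧ M x = y := by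
      intro N
      have := mem_iInter.mp hy N
      obtain ⟨m, hm⟩ := mem_iUnion.mp this
      obtain ⟨i, hi⟩ := mem_iUnion.mp hm
      obtain ⟨x, hx1, hx2⟩ := hi
      refine ⟨x, ⟨(hmem _ i).1.1.trans hx1.1, hx1.2.trans (hmem _ i).2.1.2⟩,
        mem_iUnion.mpr ⟨m, mem_iUnion.mpr ⟨i, hx1⟩⟩, hx2⟩
    choose x hx1 hx2 hx3 using hx
    have hxeq : ∀ N, x N = x 0 := by
      intro N
      by_contra hne
      rcases lt_or_gt_of_ne hne with h | h
      · exact hyF ⟨x N, x 0, h, hx3 N, hx3 0⟩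
      · exact hyF ⟨x 0, x N, h, hx3 0, hx3 N⟩
    refine ⟨x 0, ⟨hx1 0, ?_⟩, hx3 0⟩
    refine mem_iInter.mpr fun N => ?_
    rw [← hxeq N]
    exact hx2 N
  have hfinal : ENNReal.ofReal ε ≤ 0 := by
    calc ENNReal.ofReal ε ≤ volume (⋂ N, G N) := hGlim
    _ ≤ volume (M '' (Icc c d ∩ B) ∪ F) := measure_mono hincl
    _ ≤ volume (M '' (Icc c d ∩ B)) + volume F := measure_union_le _ _
    _ = 0 := by rw [hN B hBnull, hFnull, add_zero]
  simp only [nonpos_iff_eq_zero, ENNReal.ofReal_eq_zero] at hfinal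
  linarith

end L12
section Refinement
set_option maxHeartbeats 1000000

lemma absContOn_variation_sums {n : ℕ} {g : ℝ → Eucl n} {e : ℝ}
    (hfin : eVariationOn g (Icc 0 e) ≠ ⊤) (hAC : AbsContOn g (Icc 0 e)) :
    ∀ ε > (0:ℝ), ∃ δ > (0:ℝ), ∀ (k : ℕ) (u v : Fin k → ℝ),
      (∀ i, u i ∈ Icc 0 e ∧ v i ∈ Icc 0 e ∧ u i ≤ v i) →
      (∀ i j, i ≠ j → Disjoint (Ioo (u i) (v i)) (Ioo (u j) (v j))) →
      (∑ i, (v i - u i)) < δ →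
      ∑ i, (eVariationOn g (Icc 0 e ∩ Icc (u i) (v i))).toReal ≤ ε := by
  intro ε hε
  obtain ⟨δ, hδ, hACd⟩ := hAC (ε/2) (by linarith)
  refine ⟨δ, hδ, fun k u v hmem hdisj hlen => ?_⟩
  have hfin_i : ∀ i, eVariationOn g (Icc 0 e ∩ Icc (u i) (v i)) ≠ ⊤ :=
    fun i => ne_top_of_le_ne_top hfin (eVariationOn.mono g inter_subset_left)
  have key : ∀ η > (0:ℝ),
      ∑ i, (eVariationOn g (Icc 0 e ∩ Icc (u i) (v i))).toReal ≤ ε/2 + k * η := by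
    intro η hη
    have hpart : ∀ i : Fin k, ∃ (m : ℕ) (x : ℕ → ℝ), Monotone x ∧
        (∀ j, x j ∈ Icc 0 e ∩ Icc (u i) (v i)) ∧
        (eVariationOn g (Icc 0 e ∩ Icc (u i) (v i))).toReal
          ≤ (∑ j ∈ Finset.range m, dist (g (x (j+1))) (g (x j))) + η := by
      intro i
      by_cases hsmall : eVariationOn g (Icc 0 e ∩ Icc (u i) (v i)) ≤ ENNReal.ofReal η
      · exact ⟨0, fun _ => u i, monotone_const,
          fun j => ⟨(hmem i).1, le_rfl, (hmem i).2.2⟩,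
          by simpa using ENNReal.toReal_le_of_le_ofReal (le_of_lt hη) hsmall⟩
      · push_neg at hsmall
        have hVne : eVariationOn g (Icc 0 e ∩ Icc (u i) (v i)) ≠ 0 := by
          intro h
          rw [h] at hsmall
          simp at hsmall
        have hsub : eVariationOn g (Icc 0 e ∩ Icc (u i) (v i)) - ENNReal.ofReal η
            < eVariationOn g (Icc 0 e ∩ Icc (u i) (v i)) :=
          ENNReal.sub_lt_self (hfin_i i) hVne
            (by simp only [ne_eq, ENNReal.ofReal_eq_zero, not_le]; linarith)
        obtain ⟨⟨m, x, hxmono, hxmem⟩, hgt⟩ := lt_iSup_iff.mp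
          (show eVariationOn g (Icc 0 e ∩ Icc (u i) (v i)) - ENNReal.ofReal η
              < ⨆ p : ℕ × {x : ℕ → ℝ // Monotone x ∧ ∀ j, x j ∈ Icc 0 e ∩ Icc (u i) (v i)},
                ∑ j ∈ Finset.range p.1, edist (g ((p.2 : ℕ → ℝ) (j+1))) (g ((p.2 : ℕ → ℝ) j))
            from hsub)
        refine ⟨m, x, hxmono, hxmem, ?_⟩
        have hsum_eq : ∑ j ∈ Finset.range m, edist (g (x (j+1))) (g (x j))
            = ENNReal.ofReal (∑ j ∈ Finset.range m, dist (g (x (j+1))) (g (x j))) := by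
          rw [ENNReal.ofReal_sum_of_nonneg (fun j _ => dist_nonneg)]
          congr 1
          funext j
          rw [edist_dist]
        have hVle : eVariationOn g (Icc 0 e ∩ Icc (u i) (v i))
            ≤ ENNReal.ofReal ((∑ j ∈ Finset.range m, dist (g (x (j+1))) (g (x j))) + η) := by
          rw [ENNReal.ofReal_add (Finset.sum_nonneg fun j _ => dist_nonneg) hη.le, ← hsum_eq]
          exact tsub_le_iff_right.mp hgt.le
        exact ENNReal.toReal_le_of_le_ofReal
          (by positivity) hVle
    choose m x hxmono hxmem hxbound using hpart
    -- uniform length partitions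
    set Mt : ℕ := ∑ i, m i with hMt
    have hmle : ∀ i, m i ≤ Mt := fun i => Finset.single_le_sum (fun _ _ => Nat.zero_le _)
      (Finset.mem_univ i)
    set x' : Fin k → ℕ → ℝ := fun i j => x i (min j (m i)) with hx'
    have hx'mono : ∀ i, Monotone (x' i) := fun i a b hab => hxmono i (min_le_min hab le_rfl)
    have hx'mem : ∀ i j, x' i j ∈ Icc 0 e ∩ Icc (u i) (v i) := fun i j => hxmem i _
    have hsum_eq : ∀ i, ∑ j ∈ Finset.range Mt, dist (g (x' i (j+1))) (g (x' i j))
        = ∑ j ∈ Finset.range (m i), dist (g (x i (j+1))) (g (x i j)) := by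
      intro i
      rw [← Finset.sum_range_add_sum_Ico _ (hmle i)]
      have h1 : ∀ j ∈ Finset.range (m i),
          dist (g (x' i (j+1))) (g (x' i j)) = dist (g (x i (j+1))) (g (x i j)) := by
        intro j hj
        rw [Finset.mem_range] at hj
        simp only [hx']
        rw [min_eq_left hj.le, min_eq_left (Nat.succ_le_of_lt hj)]
      have h2 : ∀ j ∈ Finset.Ico (m i) Mt, dist (g (x' i (j+1))) (g (x' i j)) = 0 := by
        intro j hj
        rw [Finset.mem_Ico] at hj
        simp only [hx']
        rw [min_eq_right hj.1, min_eq_right (le_trans hj.1 (Nat.le_succ j))]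
        simp
      rw [Finset.sum_congr rfl h1, Finset.sum_eq_zero h2, add_zero]
    -- flatten via product
    set E' : Fin k × Fin Mt ≃ Fin (k * Mt) := finProdFinEquiv with hE'
    set u' : Fin (k * Mt) → ℝ := fun j => x' (E'.symm j).1 ((E'.symm j).2 : ℕ) with hu'
    set v' : Fin (k * Mt) → ℝ := fun j => x' (E'.symm j).1 (((E'.symm j).2 : ℕ) + 1) with hv'
    have hACapp : ∑ j, ‖g (v' j) - g (u' j)‖ < ε/2 := by
      apply hACd (k * Mt) u' v'
      · intro j
        exact ⟨(hx'mem _ _).1, (hx'mem _ _).1, hx'mono _ (Nat.le_succ _)⟩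
      · intro j1 j2 hj
        have hne : E'.symm j1 ≠ E'.symm j2 := fun h => hj (by
          have := congrArg E' h
          simpa using this)
        set p1 := E'.symm j1
        set p2 := E'.symm j2
        by_cases hfst : p1.1 = p2.1
        · have hsnd : (p1.2 : ℕ) ≠ (p2.2 : ℕ) := by
            intro h
            exact hne (Prod.ext hfst (Fin.ext h))
          simp only [hu', hv']
          rw [← hfst]
          rcases lt_or_gt_of_ne hsnd with h | h
          · exact Ioo_disjoint_of_le (hx'mono p1.1 (Nat.succ_le_of_lt h))
          · exact (Ioo_disjoint_of_le (hx'mono p1.1 (Nat.succ_le_of_lt h))).symm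
        · refine Disjoint.mono ?_ ?_ (hdisj p1.1 p2.1 hfst)
          · exact Ioo_subset_Ioo_of_Icc (hx'mem _ _).2 (hx'mem _ _).2
          · exact Ioo_subset_Ioo_of_Icc (hx'mem _ _).2 (hx'mem _ _).2
      · calc ∑ j, (v' j - u' j)
            = ∑ p : Fin k × Fin Mt, (x' p.1 ((p.2 : ℕ) + 1) - x' p.1 (p.2 : ℕ)) := by
              rw [← Equiv.sum_comp E'.symm]
        _ = ∑ i, ∑ jj : Fin Mt, (x' i ((jj : ℕ) + 1) - x' i (jj : ℕ)) :=
              Fintype.sum_prod_type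
                (f := fun p : Fin k × Fin Mt => x' p.1 ((p.2:ℕ) + 1) - x' p.1 (p.2:ℕ))
        _ = ∑ i, (x' i Mt - x' i 0) := by
              congr 1
              funext i
              rw [Fin.sum_univ_eq_sum_range (fun jj => x' i (jj + 1) - x' i jj) Mt,
                Finset.sum_range_sub (fun jj => x' i jj) Mt]
        _ ≤ ∑ i, (v i - u i) := by
              apply Finset.sum_le_sum
              intro i _
              have h1 := (hx'mem i Mt).2.2
              have h2 := (hx'mem i 0).2.1
              linarith
        _ < δ := hlen
    calc ∑ i, (eVariationOn g (Icc 0 e ∩ Icc (u i) (v i))).toReal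
        ≤ ∑ i, ((∑ j ∈ Finset.range (m i), dist (g (x i (j+1))) (g (x i j))) + η) :=
          Finset.sum_le_sum fun i _ => hxbound i
    _ = (∑ i, ∑ j ∈ Finset.range (m i), dist (g (x i (j+1))) (g (x i j))) + k * η := by
          rw [Finset.sum_add_distrib]
          simp [mul_comm]
    _ = (∑ i, ∑ j ∈ Finset.range Mt, dist (g (x' i (j+1))) (g (x' i j))) + k * η := by
          congr 1
          exact (Finset.sum_congr rfl fun i _ => (hsum_eq i).symm)
    _ = (∑ j, ‖g (v' j) - g (u' j)‖) + k * η := by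
          congr 1
          calc ∑ i, ∑ j ∈ Finset.range Mt, dist (g (x' i (j+1))) (g (x' i j))
              = ∑ i, ∑ jj : Fin Mt, dist (g (x' i ((jj:ℕ)+1))) (g (x' i (jj:ℕ))) := by
                congr 1
                funext i
                rw [Fin.sum_univ_eq_sum_range (fun j => dist (g (x' i (j+1))) (g (x' i j))) Mt]
          _ = ∑ p : Fin k × Fin Mt, dist (g (x' p.1 ((p.2:ℕ)+1))) (g (x' p.1 (p.2:ℕ))) :=
                (Fintype.sum_prod_type
                  (f := fun p : Fin k × Fin Mt =>
                    dist (g (x' p.1 ((p.2:ℕ)+1))) (g (x' p.1 (p.2:ℕ))))).symm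
          _ = ∑ p : Fin k × Fin Mt, ‖g (v' (E' p)) - g (u' (E' p))‖ := by
                apply Finset.sum_congr rfl
                intro p _
                simp only [hu', hv', Equiv.symm_apply_apply]
                rw [dist_eq_norm]
          _ = ∑ j, ‖g (v' j) - g (u' j)‖ := Equiv.sum_comp E' (fun j => ‖g (v' j) - g (u' j)‖)
    _ ≤ ε/2 + k * η := by linarith [hACapp]
  -- conclude
  have hfinal : ∑ i, (eVariationOn g (Icc 0 e ∩ Icc (u i) (v i))).toReal ≤ ε/2 := by
    apply le_of_forall_pos_le_add
    intro c hc
    calc ∑ i, (eVariationOn g (Icc 0 e ∩ Icc (u i) (v i))).toReal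
        ≤ ε/2 + k * (c / (k+1)) := key (c / (k+1)) (by positivity)
    _ ≤ ε/2 + c := by
          have : (k:ℝ) * (c / (k+1)) ≤ c := by
            rw [mul_div_assoc']
            rw [div_le_iff₀ (by positivity)]
            nlinarith [Nat.cast_nonneg (α := ℝ) k]
          linarith
  linarith

end Refinement
section B2
set_option maxHeartbeats 1000000

lemma open_contains_rat {s : Set ℝ} (hs : IsOpen s) {x : ℝ} (hx : x ∈ s) :
    ∃ q : ℚ, (q : ℝ) ∈ s := by
  obtain ⟨r, hr, hball⟩ := Metric.isOpen_iff.mp hs x hx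
  rw [Real.ball_eq_Ioo] at hball
  obtain ⟨q, hq1, hq2⟩ := exists_rat_btwn (show x - r < x by linarith)
  exact ⟨q, hball ⟨hq1, by linarith⟩⟩

lemma monotone_image_null_of_sums {M : ℝ → ℝ} (hM : Monotone M) {e : ℝ}
    (hsum : ∀ ε > (0:ℝ), ∃ δ > (0:ℝ), ∀ (k : ℕ) (u v : Fin k → ℝ),
      (∀ i, u i ∈ Icc 0 e ∧ v i ∈ Icc 0 e ∧ u i ≤ v i) →
      (∀ i j, i ≠ j → Disjoint (Ioo (u i) (v i)) (Ioo (u j) (v j))) →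
      (∑ i, (v i - u i)) < δ → (∑ i, (M (v i) - M (u i))) ≤ ε)
    {T : Set ℝ} (hT : volume T = 0) :
    volume (M '' (Icc 0 e ∩ T)) = 0 := by
  by_cases he : 0 ≤ e
  swap
  · rw [Icc_eq_empty (fun h => he (le_trans h (le_refl e)))]
    simp
  refine le_antisymm ?_ zero_le
  refine ENNReal.le_of_forall_pos_le_add fun ε' hε' _ => ?_
  rw [zero_add]
  obtain ⟨δ, hδ, hs⟩ := hsum ((ε' : ℝ)/2) (by positivity)
  obtain ⟨U, hUT, hUopen, hUvol⟩ := exists_isOpen_lt_of_lt T (ENNReal.ofReal δ)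
    (by rw [hT]; exact ENNReal.ofReal_pos.mpr hδ)
  set W := U ∩ Ioo 0 e with hW
  have hWopen : IsOpen W := hUopen.inter isOpen_Ioo
  -- splitting
  have hsplit : M '' (Icc 0 e ∩ T) ⊆ {M 0} ∪ {M e} ∪ M '' W := by
    rintro y ⟨x, ⟨hx1, hx2⟩, rfl⟩
    rcases eq_or_lt_of_le hx1.1 with h0 | h0
    · exact Or.inl (Or.inl (by rw [← h0]; rfl))
    rcases eq_or_lt_of_le hx1.2 with h1 | h1
    · exact Or.inl (Or.inr (by rw [h1]; rfl))
    · exact Or.inr ⟨x, ⟨hUT hx2, h0, h1⟩, rfl⟩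
  -- enumeration of rationals
  set en : ℕ → ℚ := fun j => (Denumerable.eqv ℚ).symm j with hen
  set C : ℕ → Set ℝ := fun j => connectedComponentIn W ((en j : ℚ) : ℝ) with hC
  set R : Set ℕ := {j : ℕ | ((en j : ℚ) : ℝ) ∈ C j ∧ ∀ i < j, ((en i : ℚ) : ℝ) ∉ C j} with hR
  have hcover : M '' W ⊆ ⋃ j ∈ R, M '' C j := by
    rintro y ⟨x, hx, rfl⟩
    have hCx : x ∈ connectedComponentIn W x := mem_connectedComponentIn hx
    have hCxopen : IsOpen (connectedComponentIn W x) := hWopen.connectedComponentIn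
    obtain ⟨q, hq⟩ := open_contains_rat hCxopen hCx
    have hSne : ∃ j : ℕ, ((en j : ℚ) : ℝ) ∈ connectedComponentIn W x :=
      ⟨(Denumerable.eqv ℚ) q, by rw [hen]; simp [hq]⟩
    set j₀ := Nat.find hSne with hj₀
    have hj₀mem := Nat.find_spec hSne
    have hCeq : C j₀ = connectedComponentIn W x := by
      rw [hC]
      exact (connectedComponentIn_eq hj₀mem).symm
    refine mem_biUnion (show j₀ ∈ R from ?_) ⟨x, by rw [hCeq]; exact hCx, rfl⟩
    constructor
    · rw [hCeq]; exact hj₀mem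
    · intro i hi hmem
      exact Nat.find_min hSne hi (by rwa [hCeq] at hmem)
  -- per component bounds
  have hCsub : ∀ j, C j ⊆ Ioo 0 e := fun j =>
    (connectedComponentIn_subset W _).trans inter_subset_right
  have hCord : ∀ j, (C j).OrdConnected := fun j =>
    (isPreconnected_connectedComponentIn).ordConnected
  -- main estimate
  have hmain : volume (M '' W) ≤ ENNReal.ofReal ((ε' : ℝ)/2) := by
    refine le_trans (measure_mono hcover) ?_
    refine le_trans (measure_biUnion_le volume (Set.to_countable R) _) ?_
    -- bound each term
    have hterm : ∀ j : R, volume (M '' C (j : ℕ))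
        ≤ ENNReal.ofReal (M (sSup (C (j:ℕ))) - M (sInf (C (j:ℕ)))) := by
      rintro ⟨j, hj⟩
      have hne : (C j).Nonempty := ⟨_, hj.1⟩
      have hbdd : BddAbove (C j) := ⟨e, fun x hx => (hCsub j hx).2.le⟩
      have hbdb : BddBelow (C j) := ⟨0, fun x hx => (hCsub j hx).1.le⟩
      have : M '' C j ⊆ Icc (M (sInf (C j))) (M (sSup (C j))) := by
        rintro y ⟨x, hx, rfl⟩
        exact ⟨hM (csInf_le hbdb hx), hM (le_csSup hbdd hx)⟩
      calc volume (M '' C j) ≤ volume (Icc (M (sInf (C j))) (M (sSup (C j)))) :=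
            measure_mono this
      _ = ENNReal.ofReal (M (sSup (C j)) - M (sInf (C j))) := Real.volume_Icc
    refine le_trans (ENNReal.tsum_le_tsum hterm) ?_
    -- tsum over R bounded by finite partial sums
    rw [ENNReal.tsum_eq_iSup_sum]
    refine iSup_le fun s => ?_
    -- distinct components in s
    have hCdisj : ∀ j₁ j₂ : R, j₁ ≠ j₂ → Disjoint (C (j₁:ℕ)) (C (j₂:ℕ)) := by
      rintro ⟨j₁, hj₁⟩ ⟨j₂, hj₂⟩ hne
      have hjne : j₁ ≠ j₂ := fun h => hne (Subtype.ext h)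
      rw [Set.disjoint_iff_inter_eq_empty]
      by_contra hcon
      obtain ⟨z, hz1, hz2⟩ := nonempty_iff_ne_empty.mpr hcon
      have hCeq : C j₁ = C j₂ := by
        have e1 : C j₁ = connectedComponentIn W z := connectedComponentIn_eq hz1
        have e2 : C j₂ = connectedComponentIn W z := connectedComponentIn_eq hz2
        rw [e1, e2]
      rcases lt_or_gt_of_ne hjne with h | h
      · exact hj₂.2 j₁ h (hCeq ▸ hj₁.1)
      · exact hj₁.2 j₂ h (hCeq.symm ▸ hj₂.1)
    have hIooC : ∀ j : R, Ioo (sInf (C (j:ℕ))) (sSup (C (j:ℕ))) ⊆ C (j:ℕ) := by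
      rintro ⟨j, hj⟩ x hx
      have hne : (C j).Nonempty := ⟨_, hj.1⟩
      obtain ⟨y, hy, hyx⟩ := exists_lt_of_csInf_lt hne hx.1
      obtain ⟨z, hz, hxz⟩ := exists_lt_of_lt_csSup hne hx.2
      exact (hCord j).out hy hz ⟨hyx.le, hxz.le⟩
    -- apply hs via enumeration of s
    set k := s.card with hk
    set eq := s.equivFin with heq
    set uu : Fin k → ℝ := fun i => sInf (C ((eq.symm i : R) : ℕ)) with huu
    set vv : Fin k → ℝ := fun i => sSup (C ((eq.symm i : R) : ℕ)) with hvv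
    have hmemuv : ∀ i, uu i ∈ Icc 0 e ∧ vv i ∈ Icc 0 e ∧ uu i ≤ vv i := by
      intro i
      set j := ((eq.symm i : R) : ℕ)
      have hj : j ∈ R := (eq.symm i : R).2
      have hne : (C j).Nonempty := ⟨_, hj.1⟩
      have hbdd : BddAbove (C j) := ⟨e, fun x hx => (hCsub j hx).2.le⟩
      have hbdb : BddBelow (C j) := ⟨0, fun x hx => (hCsub j hx).1.le⟩
      refine ⟨⟨le_csInf hne fun x hx => (hCsub j hx).1.le,
        csInf_le_of_le hbdb hne.choose_spec (hCsub j hne.choose_spec).2.le⟩,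
        ⟨le_csSup_of_le hbdd hne.choose_spec (hCsub j hne.choose_spec).1.le,
        csSup_le hne fun x hx => (hCsub j hx).2.le⟩,
        csInf_le_csSup hne hbdb hbdd⟩
    have hdisjuv : ∀ i₁ i₂, i₁ ≠ i₂ → Disjoint (Ioo (uu i₁) (vv i₁)) (Ioo (uu i₂) (vv i₂)) := by
      intro i₁ i₂ hne
      have h1 : ((eq.symm i₁ : {x // x ∈ s}) : ↥R) ≠ ((eq.symm i₂ : {x // x ∈ s}) : ↥R) := by
        intro h
        apply hne
        have h2 : (eq.symm i₁ : {x // x ∈ s}) = eq.symm i₂ := Subtype.ext h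
        have h3 := congrArg eq h2
        simpa using h3
      exact Disjoint.mono (hIooC _) (hIooC _) (hCdisj _ _ h1)
    have hlenuv : (∑ i, (vv i - uu i)) < δ := by
      have hof : ENNReal.ofReal (∑ i, (vv i - uu i)) < ENNReal.ofReal δ := by
        calc ENNReal.ofReal (∑ i, (vv i - uu i))
            = ∑ i, ENNReal.ofReal (vv i - uu i) :=
              ENNReal.ofReal_sum_of_nonneg fun i _ => sub_nonneg.mpr (hmemuv i).2.2
        _ = ∑ i, volume (Ioo (uu i) (vv i)) := by simp [Real.volume_Ioo]
        _ = volume (⋃ i, Ioo (uu i) (vv i)) := by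
              rw [measure_iUnion ?_ fun i => measurableSet_Ioo, tsum_fintype]
              intro i₁ i₂ hne
              exact hdisjuv i₁ i₂ hne
        _ ≤ volume U := by
              refine measure_mono (iUnion_subset fun i => ?_)
              refine (hIooC _).trans ((connectedComponentIn_subset W _).trans inter_subset_left)
        _ < ENNReal.ofReal δ := hUvol
      have hnn : 0 ≤ ∑ i, (vv i - uu i) :=
        Finset.sum_nonneg fun i _ => sub_nonneg.mpr (hmemuv i).2.2
      rwa [ENNReal.ofReal_lt_ofReal_iff_of_nonneg hnn] at hof
    have happ := hs k uu vv hmemuv hdisjuv hlenuv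
    -- transport the sum
    calc ∑ j ∈ s, ENNReal.ofReal (M (sSup (C (j:ℕ))) - M (sInf (C (j:ℕ))))
        = ENNReal.ofReal (∑ j ∈ s, (M (sSup (C (j:ℕ))) - M (sInf (C (j:ℕ))))) := by
          refine (ENNReal.ofReal_sum_of_nonneg fun j _ => ?_).symm
          have hj : (j : ℕ) ∈ R := j.2
          have hne : (C (j:ℕ)).Nonempty := ⟨_, hj.1⟩
          have hbdd : BddAbove (C (j:ℕ)) := ⟨e, fun x hx => (hCsub _ hx).2.le⟩
          have hbdb : BddBelow (C (j:ℕ)) := ⟨0, fun x hx => (hCsub _ hx).1.le⟩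
          exact sub_nonneg.mpr (hM (csInf_le_csSup hne hbdb hbdd))
    _ ≤ ENNReal.ofReal ((ε' : ℝ)/2) := by
          apply ENNReal.ofReal_le_ofReal
          calc ∑ j ∈ s, (M (sSup (C (j:ℕ))) - M (sInf (C (j:ℕ))))
              = ∑ z : {x // x ∈ s}, (M (sSup (C ((z:R):ℕ))) - M (sInf (C ((z:R):ℕ)))) :=
                (Finset.sum_coe_sort s _).symm
          _ = ∑ i, (M (vv i) - M (uu i)) := by
                rw [← Equiv.sum_comp eq.symm
                  (fun z => M (sSup (C ((z:R):ℕ))) - M (sInf (C ((z:R):ℕ))))]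
          _ ≤ (ε' : ℝ)/2 := happ
  -- combine
  calc volume (M '' (Icc 0 e ∩ T))
      ≤ volume (({M 0} ∪ {M e}) ∪ M '' W) := measure_mono (by
          intro y hy
          rcases hsplit hy with (h | h) | h
          · exact Or.inl (Or.inl h)
          · exact Or.inl (Or.inr h)
          · exact Or.inr h)
  _ ≤ volume ({M 0} ∪ {M e}) + volume (M '' W) := measure_union_le _ _
  _ ≤ (volume ({M 0} : Set ℝ) + volume ({M e} : Set ℝ)) + ENNReal.ofReal ((ε' : ℝ)/2) :=
        add_le_add (measure_union_le _ _) hmain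
  _ ≤ (ε' : ℝ≥0∞) := by
        rw [Real.volume_singleton, Real.volume_singleton, add_zero, zero_add]
        calc ENNReal.ofReal ((ε' : ℝ)/2) ≤ ENNReal.ofReal (ε' : ℝ) :=
              ENNReal.ofReal_le_ofReal (by
                have := ε'.coe_nonneg
                linarith)
        _ = (ε' : ℝ≥0∞) := ENNReal.ofReal_coe_nnreal

end B2
section CurveHelpers
set_option maxHeartbeats 1000000

def CurveIn.restr {n : ℕ} (β : CurveIn n) (a b : ℝ) (ha : a ∈ β.I) (hb : b ∈ β.I) :
    CurveIn n :=
  ⟨Icc a b, Set.ordConnected_Icc, β.toFun, β.cont.mono (β.ordConn.out ha hb)⟩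

lemma pModule_le_of_adm {n : ℕ} {p : ℝ} {Γ Γ' : Set (CurveIn n)}
    (h : ∀ ρ, IsAdmissible ρ Γ → IsAdmissible ρ Γ') :
    pModule p Γ' ≤ pModule p Γ := by
  unfold pModule
  exact le_iInf₂ fun ρ hρ => iInf₂_le ρ (h ρ hρ)

lemma exists_admissible_of_pModule_zero {n : ℕ} {p : ℝ} {Γ : Set (CurveIn n)}
    (h : pModule p Γ = 0) : ∃ ρ, IsAdmissible ρ Γ := by
  by_contra hcon
  push_neg at hcon
  have htop : pModule p Γ = ⊤ := by
    unfold pModule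
    rw [iInf_eq_top]
    intro ρ
    rw [iInf_eq_top]
    exact fun hadm => absurd hadm (hcon ρ)
  rw [h] at htop
  exact absurd htop (by simp)

lemma restr_locRect {n : ℕ} {β : CurveIn n} (hLR : β.LocRect) {a b : ℝ}
    (ha : a ∈ β.I) (hb : b ∈ β.I) : (β.restr a b ha hb).LocRect := by
  intro a' ha' b' hb'
  have hsub : Icc a b ⊆ β.I := β.ordConn.out ha hb
  refine lt_of_le_of_lt (eVariationOn.mono _ ?_) (hLR a' (hsub ha') b' (hsub hb'))
  exact inter_subset_inter_left _ hsub

lemma restr_lineIntegral_le {n : ℕ} (β : CurveIn n) {a b : ℝ}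
    (ha : a ∈ β.I) (hb : b ∈ β.I) (ρ : Eucl n → ℝ≥0∞) :
    (β.restr a b ha hb).lineIntegral ρ ≤ β.lineIntegral ρ := by
  refine iSup₂_le fun x hx => iSup₂_le fun y hy => ?_
  exact le_iSup₂_of_le x (β.ordConn.out ha hb hx)
    (le_iSup₂_of_le y (β.ordConn.out ha hb hy) le_rfl)

lemma const_lineIntegral_zero {n : ℕ} {β : CurveIn n}
    (hconst : (β.toFun '' β.I).Subsingleton) (ρ : Eucl n → ℝ≥0∞) :
    β.lineIntegral ρ = 0 := by
  refine le_antisymm (iSup₂_le fun x hx => iSup₂_le fun y hy => ?_) zero_le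
  unfold segLIntegral
  have hxy : Icc x y ⊆ β.I := β.ordConn.out hx hy
  have : eVariationOn β.toFun (Icc x y) = 0 :=
    eVariationOn.constant_on (hconst.anti (image_mono hxy))
  rw [this]
  simp

lemma const_not_mem {n : ℕ} {p : ℝ} {Γ : Set (CurveIn n)} (hmod : pModule p Γ = 0)
    {β : CurveIn n} (hconst : (β.toFun '' β.I).Subsingleton) : β ∉ Γ := by
  intro hβ
  obtain ⟨ρ, hadm⟩ := exists_admissible_of_pModule_zero hmod
  have hLR : β.LocRect := by
    intro a ha b hb
    have : eVariationOn β.toFun (β.I ∩ Icc a b) = 0 :=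
      eVariationOn.constant_on (hconst.anti (image_mono inter_subset_left))
    rw [this]
    exact ENNReal.zero_lt_top
  have h1 := hadm.2 β hβ hLR
  rw [const_lineIntegral_zero hconst] at h1
  simp at h1

lemma eVariationOn_LocRect_Icc {n : ℕ} {β : CurveIn n} (hLR : β.LocRect)
    {a b : ℝ} (ha : a ∈ β.I) (hb : b ∈ β.I) :
    eVariationOn β.toFun (Icc a b) ≠ ⊤ := by
  have hsub : Icc a b ⊆ β.I := β.ordConn.out ha hb
  have := hLR a ha b hb
  rw [inter_eq_self_of_subset_right hsub] at this
  exact this.ne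

lemma fiber_flat_const {n : ℕ} {f : Eucl n → Eucl n} {D : Set (Eucl n)}
    (hconj1 : ∀ y : Eucl n, ∀ κ : CurveIn n,
      (∀ t ∈ κ.I, κ.toFun t ∈ D ∧ f (κ.toFun t) = y) →
      ∀ s ∈ κ.I, ∀ t ∈ κ.I, κ.toFun s = κ.toFun t)
    {γ γt : ℝ → Eucl n} {c d : ℝ}
    (hγcont : ContinuousOn γ (Icc c d)) (hγD : ∀ t ∈ Icc c d, γ t ∈ D)
    (hfγ : ∀ t ∈ Icc c d, f (γ t) = γt t)
    {s t : ℝ} (hs : s ∈ Icc c d) (ht : t ∈ Icc c d) (hst : s ≤ t)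
    (hflat : eVariationOn γt (Icc s t) = 0) :
    γ s = γ t := by
  have hsub : Icc s t ⊆ Icc c d := Icc_subset_Icc hs.1 ht.2
  have hconst : ∀ u ∈ Icc s t, γt u = γt s := fun u hu =>
    eq_of_eVariationOn_zero hflat hu (left_mem_Icc.mpr hst)
  let κ : CurveIn n := ⟨Icc s t, Set.ordConnected_Icc, γ, hγcont.mono hsub⟩
  exact hconj1 (γt s) κ
    (fun u hu => ⟨hγD u (hsub hu), by rw [hfγ u (hsub hu)]; exact hconst u hu⟩)
    s (left_mem_Icc.mpr hst) t (right_mem_Icc.mpr hst)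

lemma fiber_flat_evar_zero {n : ℕ} {f : Eucl n → Eucl n} {D : Set (Eucl n)}
    (hconj1 : ∀ y : Eucl n, ∀ κ : CurveIn n,
      (∀ t ∈ κ.I, κ.toFun t ∈ D ∧ f (κ.toFun t) = y) →
      ∀ s ∈ κ.I, ∀ t ∈ κ.I, κ.toFun s = κ.toFun t)
    {γ γt : ℝ → Eucl n} {c d : ℝ}
    (hγcont : ContinuousOn γ (Icc c d)) (hγD : ∀ t ∈ Icc c d, γ t ∈ D)
    (hfγ : ∀ t ∈ Icc c d, f (γ t) = γt t)
    {s t : ℝ} (hs : s ∈ Icc c d) (ht : t ∈ Icc c d) (hst : s ≤ t)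
    (hflat : eVariationOn γt (Icc s t) = 0) :
    eVariationOn γ (Icc s t) = 0 := by
  apply eVariationOn.constant_on
  rintro y ⟨x, hx, rfl⟩ y' ⟨x', hx', rfl⟩
  have hsub : Icc s t ⊆ Icc c d := Icc_subset_Icc hs.1 ht.2
  have key : ∀ z z' : ℝ, z ∈ Icc s t → z' ∈ Icc s t → z ≤ z' → γ z = γ z' := by
    intro z z' hz hz' hzz
    refine fiber_flat_const hconj1 hγcont hγD hfγ (hsub hz) (hsub hz') hzz ?_
    exact le_antisymm
      (le_trans (eVariationOn.mono _ (Icc_subset_Icc hz.1 hz'.2)) hflat.le) zero_le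
  rcases le_total x x' with h | h
  · exact key x x' hx hx' h
  · exact (key x' x hx' hx h).symm

lemma image_flat {n : ℕ} {f : Eucl n → Eucl n} {γ γt : ℝ → Eucl n} {c d : ℝ}
    (hfγ : ∀ t ∈ Icc c d, f (γ t) = γt t)
    {s t : ℝ} (hs : s ∈ Icc c d) (ht : t ∈ Icc c d)
    (hflat : eVariationOn γ (Icc s t) = 0) : eVariationOn γt (Icc s t) = 0 := by
  apply eVariationOn.constant_on
  rintro y ⟨x, hx, rfl⟩ y' ⟨x', hx', rfl⟩
  have hsub : Icc s t ⊆ Icc c d := Icc_subset_Icc hs.1 ht.2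
  rw [← hfγ x (hsub hx), ← hfγ x' (hsub hx'),
    eq_of_eVariationOn_zero hflat hx hx']

lemma star_var_eq {n : ℕ} {γ γstar : ℝ → Eucl n} {w : ℝ → ℝ} {c d : ℝ}
    (hwmono : MonotoneOn w (Icc c d))
    (hstar : ∀ t ∈ Icc c d, γstar (w t) = γ t)
    {s t : ℝ} (hs : s ∈ Icc c d) (ht : t ∈ Icc c d) (hst : s ≤ t) :
    eVariationOn γstar (w '' Icc c d ∩ Icc (w s) (w t)) = eVariationOn γ (Icc s t) := by
  have hsub : Icc s t ⊆ Icc c d := Icc_subset_Icc hs.1 ht.2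
  have himg : w '' Icc s t = w '' Icc c d ∩ Icc (w s) (w t) := by
    apply subset_antisymm
    · rintro x ⟨r, hr, rfl⟩
      exact ⟨⟨r, hsub hr, rfl⟩, hwmono hs (hsub hr) hr.1, hwmono (hsub hr) ht hr.2⟩
    · rintro x ⟨⟨r, hr, rfl⟩, h1, h2⟩
      rcases le_total r s with hrs | hrs
      · exact ⟨s, left_mem_Icc.mpr hst, le_antisymm h1 (hwmono hr hs hrs) ▸ rfl⟩
      rcases le_total t r with hrt | hrt
      · exact ⟨t, right_mem_Icc.mpr hst, le_antisymm (hwmono ht hr hrt) h2 ▸ rfl⟩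
      · exact ⟨r, ⟨hrs, hrt⟩, rfl⟩
  rw [← himg, ← eVariationOn.comp_eq_of_monotoneOn γstar w (hwmono.mono hsub)]
  exact eVariationOn.eq_of_eqOn fun u hu => hstar u (hsub hu)

end CurveHelpers
section Forward
set_option maxHeartbeats 1000000

lemma forward_conj1 {n : ℕ} {f : Eucl n → Eucl n} {D : Set (Eucl n)} {p : ℝ}
    (h : HasL2pProperty f D p) :
    ∀ y : Eucl n, ∀ γ : CurveIn n,
      (∀ t ∈ γ.I, γ.toFun t ∈ D ∧ f (γ.toFun t) = y) →
      ∀ s ∈ γ.I, ∀ t ∈ γ.I, γ.toFun s = γ.toFun t := by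
  obtain ⟨Γ₀, hΓ₀sub, hmod, hmain⟩ := h
  suffices key : ∀ y : Eucl n, ∀ γ : CurveIn n,
      (∀ t ∈ γ.I, γ.toFun t ∈ D ∧ f (γ.toFun t) = y) →
      ∀ s ∈ γ.I, ∀ t ∈ γ.I, s ≤ t → γ.toFun s = γ.toFun t by
    intro y γ hγ s hs t ht
    rcases le_total s t with hst | hst
    · exact key y γ hγ s hs t ht hst
    · exact (key y γ hγ t ht s hs hst).symm
  intro y γ hγ s hs t ht hst
  set γt : CurveIn n := ⟨γ.I, γ.ordConn, fun _ => y, continuousOn_const⟩ with hγt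
  have hγtconst : (γt.toFun '' γt.I).Subsingleton := by
    rintro a ⟨x, _, rfl⟩ b ⟨x', _, rfl⟩
    rfl
  have hγtmem : γt.InSet (f '' D) := fun u hu => ⟨γ.toFun u, (hγ u hu).1, (hγ u hu).2⟩
  have hγtnot : γt ∉ Γ₀ := const_not_mem hmod hγtconst
  obtain ⟨hrect, hN⟩ := hmain γt hγtmem hγtnot γ (fun u hu => (hγ u hu).1) rfl
    (fun u hu => (hγ u hu).2)
  have hL := hN s hs (fun _ => (0:ℝ)) (monotoneOn_const)
    (fun u _ => (variationOnFromTo_zero_of_const hγtconst s u).symm) {0}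
    Real.volume_singleton
  have hpre : (fun _ : ℝ => (0:ℝ)) ⁻¹' {0} = univ := by ext x; simp
  rw [hpre, inter_univ] at hL
  by_contra hne
  have hsub : Icc s t ⊆ γ.I := γ.ordConn.out hs ht
  have hfin : eVariationOn γ.toFun (Icc s t) ≠ ⊤ := eVariationOn_LocRect_Icc hrect hs ht
  have hvcont := variation_continuousOn (γ.cont.mono hsub) hfin
  have hd : 0 < dist (γ.toFun s) (γ.toFun t) := dist_pos.mpr hne
  have hvt : dist (γ.toFun s) (γ.toFun t) ≤ variationOnFromTo γ.toFun (Icc s t) s t := by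
    rw [variationOnFromTo.eq_of_le _ _ hst, inter_self]
    exact dist_le_evar_toReal hst hfin
  have hIcc : Icc (0:ℝ) (variationOnFromTo γ.toFun (Icc s t) s t)
      ⊆ (fun u => variationOnFromTo γ.toFun (Icc s t) s u) '' Icc s t := by
    have h2 := intermediate_value_Icc hst hvcont
    rwa [variationOnFromTo.self] at h2
  have himg_sub : (fun u => variationOnFromTo γ.toFun (Icc s t) s u) '' Icc s t
      ⊆ (fun u => variationOnFromTo γ.toFun γ.I s u) '' γ.I := by
    rintro x ⟨r, hr, rfl⟩
    exact ⟨r, hsub hr, variationOnFromTo_subset hsub (left_mem_Icc.mpr hst) hr⟩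
  have hpos : (0:ℝ≥0∞) < volume ((fun u => variationOnFromTo γ.toFun γ.I s u) '' γ.I) := by
    calc (0:ℝ≥0∞) < ENNReal.ofReal (variationOnFromTo γ.toFun (Icc s t) s t) :=
          ENNReal.ofReal_pos.mpr (lt_of_lt_of_le hd hvt)
    _ = volume (Icc (0:ℝ) (variationOnFromTo γ.toFun (Icc s t) s t)) := by
          rw [Real.volume_Icc, sub_zero]
    _ ≤ volume ((fun u => variationOnFromTo γ.toFun γ.I s u) '' γ.I) :=
          measure_mono (hIcc.trans himg_sub)
  rw [hL] at hpos
  exact lt_irrefl _ hpos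

end Forward
section ForwardMain
set_option maxHeartbeats 2000000

lemma l2p_forward_main {n : ℕ} {f : Eucl n → Eucl n} {D : Set (Eucl n)} {p : ℝ}
    (h : HasL2pProperty f D p) :
    ∃ Γ₁ : Set (CurveIn n),
      (∀ β ∈ Γ₁, β.InSet (f '' D)) ∧ pModule p Γ₁ = 0 ∧
      ∀ (a b : ℝ), a ≤ b → ∀ γt : CurveIn n, γt.I = Set.Icc a b →
        γt.InSet (f '' D) → eVariationOn γt.toFun (Set.Icc a b) < ⊤ →
        γt ∉ Γ₁ →
        ∀ γ : CurveIn n, γ.I = Set.Icc a b → γ.InSet D →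
          (∀ t ∈ Set.Icc a b, f (γ.toFun t) = γt.toFun t) →
          ∀ γstar : ℝ → Eucl n,
            (∀ t ∈ Set.Icc a b,
              γstar (variationOnFromTo γt.toFun (Set.Icc a b) a t) = γ.toFun t) →
            eVariationOn γstar
                ((fun t => variationOnFromTo γt.toFun (Set.Icc a b) a t) '' Set.Icc a b) < ⊤ ∧
            AbsContOn γstar
                ((fun t => variationOnFromTo γt.toFun (Set.Icc a b) a t) '' Set.Icc a b) := by
  have hconj1 := forward_conj1 h
  obtain ⟨Γ₀, hΓ₀sub, hmod, hmain⟩ := h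
  refine ⟨Γ₀ ∪ {β | β.InSet (f '' D) ∧ ¬ β.LocRect}, ?_, ?_, ?_⟩
  · rintro β (hβ | ⟨hβ1, _⟩)
    exacts [hΓ₀sub β hβ, hβ1]
  · refine le_antisymm (le_trans (pModule_le_of_adm ?_) hmod.le) zero_le
    intro ρ hρ
    refine ⟨hρ.1, ?_⟩
    rintro β (hβ | ⟨_, hnl⟩) hLR
    · exact hρ.2 β hβ hLR
    · exact absurd hLR hnl
  intro a b hab γt hγtI hγtmem hγtvar hγtnot γ hγI hγmem hfγ γstar hstar
  have hγtnot0 : γt ∉ Γ₀ := fun hh => hγtnot (Or.inl hh)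
  obtain ⟨hrect, hN⟩ := hmain γt hγtmem hγtnot0 γ hγmem (by rw [hγI, hγtI])
    (by
      intro u hu
      rw [hγI] at hu
      exact hfγ u hu)
  -- notation
  set w : ℝ → ℝ := fun u => variationOnFromTo γt.toFun (Icc a b) a u with hw
  set v : ℝ → ℝ := fun u => variationOnFromTo γ.toFun (Icc a b) a u with hv
  have hγfin : eVariationOn γ.toFun (Icc a b) ≠ ⊤ := by
    have h2 := hrect a (by rw [hγI]; exact left_mem_Icc.mpr hab)
      b (by rw [hγI]; exact right_mem_Icc.mpr hab)
    rw [hγI, inter_self] at h2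
    exact h2.ne
  have hγtfin : eVariationOn γt.toFun (Icc a b) ≠ ⊤ := hγtvar.ne
  have hγcont : ContinuousOn γ.toFun (Icc a b) := hγI ▸ γ.cont
  have hγtcont : ContinuousOn γt.toFun (Icc a b) := hγtI ▸ γt.cont
  have hwLBV : LocallyBoundedVariationOn γt.toFun (Icc a b) :=
    BoundedVariationOn.locallyBoundedVariationOn hγtfin
  have hvLBV : LocallyBoundedVariationOn γ.toFun (Icc a b) :=
    BoundedVariationOn.locallyBoundedVariationOn hγfin
  have hwmono : MonotoneOn w (Icc a b) :=
    variationOnFromTo.monotoneOn hwLBV (left_mem_Icc.mpr hab)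
  have hvmono : MonotoneOn v (Icc a b) :=
    variationOnFromTo.monotoneOn hvLBV (left_mem_Icc.mpr hab)
  have hwE : w '' Icc a b = Icc 0 (w b) := varFT_image_Icc hab hγtcont hγtfin
  have hvE : v '' Icc a b = Icc 0 (v b) := varFT_image_Icc hab hγcont hγfin
  have hγD : ∀ u ∈ Icc a b, γ.toFun u ∈ D := by
    intro u hu
    apply hγmem
    rw [hγI]
    exact hu
  have hwa : w a = 0 := variationOnFromTo.self _ _ a
  have hva : v a = 0 := variationOnFromTo.self _ _ a
  have hfinsub : ∀ s' t' : ℝ, s' ∈ Icc a b → t' ∈ Icc a b → s' ≤ t' →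
      eVariationOn γ.toFun (Icc s' t') ≠ ⊤ := fun s' t' hs ht hst =>
    ne_top_of_le_ne_top hγfin (eVariationOn.mono _ (Icc_subset_Icc hs.1 ht.2))
  have hfinsubt : ∀ s' t' : ℝ, s' ∈ Icc a b → t' ∈ Icc a b → s' ≤ t' →
      eVariationOn γt.toFun (Icc s' t') ≠ ⊤ := fun s' t' hs ht hst =>
    ne_top_of_le_ne_top hγtfin (eVariationOn.mono _ (Icc_subset_Icc hs.1 ht.2))
  -- flat transfer in both directions
  have hwflat : ∀ s' t', s' ∈ Icc a b → t' ∈ Icc a b → s' ≤ t' → w s' = w t' → v s' = v t' := by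
    intro s' t' hs ht hst heq
    have h0 : eVariationOn γt.toFun (Icc s' t') = 0 := by
      have h2 := varFT_sub hwLBV hs ht hst
      rw [show w t' - w s' = 0 by rw [heq]; ring] at h2
      rcases (ENNReal.toReal_eq_zero_iff _).mp h2.symm with h3 | h3
      · exact h3
      · exact absurd h3 (hfinsubt s' t' hs ht hst)
    have h1 : eVariationOn γ.toFun (Icc s' t') = 0 :=
      fiber_flat_evar_zero hconj1 hγcont hγD hfγ hs ht hst h0
    have h2 := varFT_sub hvLBV hs ht hst
    rw [h1] at h2
    simp only [ENNReal.toReal_zero] at h2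
    linarith
  have hvflat : ∀ s' t', s' ∈ Icc a b → t' ∈ Icc a b → s' ≤ t' → v s' = v t' → w s' = w t' := by
    intro s' t' hs ht hst heq
    have h0 : eVariationOn γ.toFun (Icc s' t') = 0 := by
      have h2 := varFT_sub hvLBV hs ht hst
      rw [show v t' - v s' = 0 by rw [heq]; ring] at h2
      rcases (ENNReal.toReal_eq_zero_iff _).mp h2.symm with h3 | h3
      · exact h3
      · exact absurd h3 (hfinsub s' t' hs ht hst)
    have h1 : eVariationOn γt.toFun (Icc s' t') = 0 := image_flat hfγ hs ht h0
    have h2 := varFT_sub hwLBV hs ht hst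
    rw [h1] at h2
    simp only [ENNReal.toReal_zero] at h2
    linarith
  obtain ⟨M, hMmono, hMeq⟩ := transfer_exists hab hwmono hvmono
    (fun u hu => variationOnFromTo.nonneg_of_le _ _ hu.1) hwflat
  obtain ⟨L, hLmono, hLeq⟩ := transfer_exists hab hvmono hwmono
    (fun u hu => variationOnFromTo.nonneg_of_le _ _ hu.1) hvflat
  -- instantiate the N⁻¹ property
  rw [hγI, hγtI] at hN
  have hNM : ∀ S : Set ℝ, volume S = 0 → volume (M '' (Icc 0 (w b) ∩ S)) = 0 := by
    intro S hS
    have hL2 := hN a (left_mem_Icc.mpr hab) L (hLmono.monotoneOn _) hLeq S hS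
    refine le_antisymm (le_trans (measure_mono ?_) hL2.le) zero_le
    rintro y ⟨x, ⟨hxE, hxS⟩, rfl⟩
    rw [← hwE] at hxE
    obtain ⟨u, hu, rfl⟩ := hxE
    refine ⟨⟨u, hu, (hMeq u hu).symm⟩, ?_⟩
    show L (M (w u)) ∈ S
    rw [hMeq u hu, hLeq u hu]
    exact hxS
  -- himg for L12
  have hM0 : M 0 = 0 := by
    have h2 := hMeq a (left_mem_Icc.mpr hab)
    rw [hwa, hva] at h2
    exact h2
  have hMb : M (w b) = v b := hMeq b (right_mem_Icc.mpr hab)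
  have himg : ∀ y, M 0 ≤ y → y ≤ M (w b) → ∃ x ∈ Icc 0 (w b), M x = y := by
    intro y h1 h2
    rw [hM0] at h1
    rw [hMb] at h2
    have : y ∈ v '' Icc a b := by
      rw [hvE]
      exact ⟨h1, h2⟩
    obtain ⟨u, hu, rfl⟩ := this
    exact ⟨w u, by rw [← hwE]; exact ⟨u, hu, rfl⟩, hMeq u hu⟩
  constructor
  · -- rectifiability of γstar
    have hsve := star_var_eq (γ := γ.toFun) hwmono hstar
      (left_mem_Icc.mpr hab) (right_mem_Icc.mpr hab) hab
    have hinter : w '' Icc a b ∩ Icc (w a) (w b) = w '' Icc a b := by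
      apply inter_eq_self_of_subset_left
      rintro x ⟨u, hu, rfl⟩
      exact ⟨hwmono (left_mem_Icc.mpr hab) hu hu.1, hwmono hu (right_mem_Icc.mpr hab) hu.2⟩
    rw [hinter] at hsve
    rw [show ((fun t => variationOnFromTo γt.toFun (Icc a b) a t) '' Icc a b) = w '' Icc a b
      from rfl, hsve]
    exact hγfin.lt_top
  · -- absolute continuity of γstar
    intro ε hε
    obtain ⟨δ, hδ, hsM⟩ := monotone_lusinNinv_AC hMmono
      (variationOnFromTo.nonneg_of_le γt.toFun _ hab) himg hNM ε hε
    refine ⟨δ, hδ, fun k uu vv hmem hdisj hlen => ?_⟩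
    have hterm : ∀ i, ‖γstar (vv i) - γstar (uu i)‖ ≤ M (vv i) - M (uu i) := by
      intro i
      obtain ⟨hui, hvi, huvi⟩ := hmem i
      obtain ⟨s', hs', hws'⟩ := hui
      obtain ⟨t', ht', hwt'⟩ := hvi
      rcases le_total s' t' with hst' | hst'
      · rw [← hws', ← hwt', hstar s' hs', hstar t' ht', hMeq s' hs', hMeq t' ht']
        calc ‖γ.toFun t' - γ.toFun s'‖ = dist (γ.toFun s') (γ.toFun t') := by
              rw [dist_eq_norm, norm_sub_rev]
        _ ≤ (eVariationOn γ.toFun (Icc s' t')).toReal :=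
              dist_le_evar_toReal hst' (hfinsub s' t' hs' ht' hst')
        _ = v t' - v s' := (varFT_sub hvLBV hs' ht' hst').symm
      · have hle : vv i ≤ uu i := by
          rw [← hws', ← hwt']
          exact hwmono ht' hs' hst'
        have heq : uu i = vv i := le_antisymm huvi hle
        rw [heq]
        simp
    calc ∑ i, ‖γstar (vv i) - γstar (uu i)‖ ≤ ∑ i, (M (vv i) - M (uu i)) :=
          Finset.sum_le_sum fun i _ => hterm i
    _ < ε := by
          apply hsM k uu vv ?_ hdisj hlen
          intro i
          obtain ⟨hui, hvi, huvi⟩ := hmem i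
          rw [← hwE]
          exact ⟨hui, hvi, huvi⟩

end ForwardMain
section Backward
set_option maxHeartbeats 2000000

lemma l2p_backward {n : ℕ} {f : Eucl n → Eucl n} {D : Set (Eucl n)} {p : ℝ}
    (hconj1 : ∀ y : Eucl n, ∀ κ : CurveIn n,
      (∀ t ∈ κ.I, κ.toFun t ∈ D ∧ f (κ.toFun t) = y) →
      ∀ s ∈ κ.I, ∀ t ∈ κ.I, κ.toFun s = κ.toFun t)
    (Γ₁ : Set (CurveIn n))
    (hΓ₁sub : ∀ β ∈ Γ₁, β.InSet (f '' D)) (hmod : pModule p Γ₁ = 0)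
    (hmain : ∀ (a b : ℝ), a ≤ b → ∀ γt : CurveIn n, γt.I = Set.Icc a b →
        γt.InSet (f '' D) → eVariationOn γt.toFun (Set.Icc a b) < ⊤ →
        γt ∉ Γ₁ →
        ∀ γ : CurveIn n, γ.I = Set.Icc a b → γ.InSet D →
          (∀ t ∈ Set.Icc a b, f (γ.toFun t) = γt.toFun t) →
          ∀ γstar : ℝ → Eucl n,
            (∀ t ∈ Set.Icc a b,
              γstar (variationOnFromTo γt.toFun (Set.Icc a b) a t) = γ.toFun t) →
            eVariationOn γstar
                ((fun t => variationOnFromTo γt.toFun (Set.Icc a b) a t) '' Set.Icc a b) < ⊤ ∧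
            AbsContOn γstar
                ((fun t => variationOnFromTo γt.toFun (Set.Icc a b) a t) '' Set.Icc a b)) :
    HasL2pProperty f D p := by
  classical
  refine ⟨{β | β.InSet (f '' D) ∧ (¬ β.LocRect ∨
      ∃ a b, ∃ (ha : a ∈ β.I) (hb : b ∈ β.I), a ≤ b ∧ β.restr a b ha hb ∈ Γ₁)},
    fun β hβ => hβ.1, ?_, ?_⟩
  · refine le_antisymm (le_trans (pModule_le_of_adm ?_) hmod.le) zero_le
    intro ρ hρ
    refine ⟨hρ.1, ?_⟩
    rintro β ⟨hβmem, (hnl | ⟨a, b, ha, hb, hab, hres⟩)⟩ hLR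
    · exact absurd hLR hnl
    · calc (1:ℝ≥0∞) ≤ (β.restr a b ha hb).lineIntegral ρ :=
            hρ.2 _ hres (restr_locRect hLR ha hb)
      _ ≤ β.lineIntegral ρ := restr_lineIntegral_le β ha hb ρ
  intro γt hγtmem hγtnot γ hγmem hγI hfγ
  have hγtLR : γt.LocRect := not_not.mp (fun hh => hγtnot ⟨hγtmem, Or.inl hh⟩)
  have hres_not : ∀ (a b : ℝ) (ha : a ∈ γt.I) (hb : b ∈ γt.I), a ≤ b →
      γt.restr a b ha hb ∉ Γ₁ :=
    fun a b ha hb hab hres => hγtnot ⟨hγtmem, Or.inr ⟨a, b, ha, hb, hab, hres⟩⟩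
  -- the per-interval workhorse
  have key : ∀ c d : ℝ, ∀ (hc : c ∈ γt.I) (hd : d ∈ γt.I), c ≤ d →
      eVariationOn γ.toFun (Icc c d) < ⊤ ∧
      ∀ S' : Set ℝ, volume S' = 0 →
        volume {x : ℝ | ∃ t ∈ Icc c d,
          variationOnFromTo γ.toFun (Icc c d) c t = x ∧
          variationOnFromTo γt.toFun (Icc c d) c t ∈ S'} = 0 := by
    intro c d hc hd hcd
    have hc' : c ∈ γ.I := by rw [hγI]; exact hc
    have hd' : d ∈ γ.I := by rw [hγI]; exact hd
    have hsubt : Icc c d ⊆ γt.I := γt.ordConn.out hc hd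
    have hsubγ : Icc c d ⊆ γ.I := γ.ordConn.out hc' hd'
    set wc : ℝ → ℝ := fun u => variationOnFromTo γt.toFun (Icc c d) c u with hwc
    set vc : ℝ → ℝ := fun u => variationOnFromTo γ.toFun (Icc c d) c u with hvc
    have hγtfin : eVariationOn γt.toFun (Icc c d) ≠ ⊤ := eVariationOn_LocRect_Icc hγtLR hc hd
    have hγtcont : ContinuousOn γt.toFun (Icc c d) := γt.cont.mono hsubt
    have hγcont : ContinuousOn γ.toFun (Icc c d) := γ.cont.mono hsubγ
    have hγD : ∀ u ∈ Icc c d, γ.toFun u ∈ D := fun u hu => hγmem u (hsubγ hu)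
    have hfγcd : ∀ u ∈ Icc c d, f (γ.toFun u) = γt.toFun u := fun u hu => hfγ u (hsubγ hu)
    have hwcLBV : LocallyBoundedVariationOn γt.toFun (Icc c d) :=
      BoundedVariationOn.locallyBoundedVariationOn hγtfin
    have hwcmono : MonotoneOn wc (Icc c d) :=
      variationOnFromTo.monotoneOn hwcLBV (left_mem_Icc.mpr hcd)
    have hfinsubt : ∀ s' t' : ℝ, s' ∈ Icc c d → t' ∈ Icc c d →
        eVariationOn γt.toFun (Icc s' t') ≠ ⊤ := fun s' t' hs ht =>
      ne_top_of_le_ne_top hγtfin (eVariationOn.mono _ (Icc_subset_Icc hs.1 ht.2))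
    -- flatness of wc forces flatness of γ
    have hflat0 : ∀ s' t', s' ∈ Icc c d → t' ∈ Icc c d → s' ≤ t' → wc s' = wc t' →
        eVariationOn γt.toFun (Icc s' t') = 0 := by
      intro s' t' hs ht hst heq
      have h2 := varFT_sub hwcLBV hs ht hst
      rw [show wc t' - wc s' = 0 by rw [heq]; ring] at h2
      rcases (ENNReal.toReal_eq_zero_iff _).mp h2.symm with h3 | h3
      · exact h3
      · exact absurd h3 (hfinsubt s' t' hs ht)
    have hwcflatγ : ∀ s' t', s' ∈ Icc c d → t' ∈ Icc c d → wc s' = wc t' →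
        γ.toFun s' = γ.toFun t' := by
      intro s' t' hs ht heq
      rcases le_total s' t' with h | h
      · exact fiber_flat_const hconj1 hγcont hγD hfγcd hs ht h (hflat0 s' t' hs ht h heq)
      · exact (fiber_flat_const hconj1 hγcont hγD hfγcd ht hs h
          (hflat0 t' s' ht hs h heq.symm)).symm
    -- construct γstar
    set γstar : ℝ → Eucl n := fun x =>
      if h : ∃ t, t ∈ Icc c d ∧ wc t = x then γ.toFun h.choose else γ.toFun c with hγstar
    have hstar : ∀ t ∈ Icc c d, γstar (wc t) = γ.toFun t := by
      intro t ht
      have hex : ∃ t', t' ∈ Icc c d ∧ wc t' = wc t := ⟨t, ht, rfl⟩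
      rw [hγstar]
      simp only [dif_pos hex]
      exact hwcflatγ _ t hex.choose_spec.1 ht hex.choose_spec.2
    -- apply the hypothesis
    have happly := hmain c d hcd (γt.restr c d hc hd) rfl
      (fun u hu => hγtmem u (hsubt hu)) (by rwa [lt_top_iff_ne_top])
      (hres_not c d hc hd hcd)
      (γ.restr c d hc' hd') rfl (fun u hu => hγmem u (hsubγ hu))
      (fun u hu => hfγcd u hu) γstar (fun u hu => hstar u hu)
    obtain ⟨hfinstar, hACstar⟩ := happly
    -- basic identities
    have hE : wc '' Icc c d = Icc 0 (wc d) := varFT_image_Icc hcd hγtcont hγtfin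
    have hsve := star_var_eq (γ := γ.toFun) hwcmono hstar
      (left_mem_Icc.mpr hcd) (right_mem_Icc.mpr hcd) hcd
    have hinter : wc '' Icc c d ∩ Icc (wc c) (wc d) = wc '' Icc c d := by
      apply inter_eq_self_of_subset_left
      rintro x ⟨u, hu, rfl⟩
      exact ⟨hwcmono (left_mem_Icc.mpr hcd) hu hu.1, hwcmono hu (right_mem_Icc.mpr hcd) hu.2⟩
    rw [hinter] at hsve
    have hγfin_cd : eVariationOn γ.toFun (Icc c d) < ⊤ := by
      rw [← hsve]
      exact hfinstar
    refine ⟨hγfin_cd, ?_⟩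
    -- now the null-image property
    intro S' hS'
    have hvcLBV : LocallyBoundedVariationOn γ.toFun (Icc c d) :=
      BoundedVariationOn.locallyBoundedVariationOn hγfin_cd.ne
    have hvcmono : MonotoneOn vc (Icc c d) :=
      variationOnFromTo.monotoneOn hvcLBV (left_mem_Icc.mpr hcd)
    have hwcflat : ∀ s' t', s' ∈ Icc c d → t' ∈ Icc c d → s' ≤ t' → wc s' = wc t' →
        vc s' = vc t' := by
      intro s' t' hs ht hst heq
      have h0 : eVariationOn γ.toFun (Icc s' t') = 0 := by
        apply eVariationOn.constant_on
        rintro y ⟨x, hx, rfl⟩ y' ⟨x', hx', rfl⟩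
        have hsub2 : Icc s' t' ⊆ Icc c d := Icc_subset_Icc hs.1 ht.2
        have hwx : wc x = wc x' := by
          have h1 : wc s' ≤ wc x := hwcmono hs (hsub2 hx) hx.1
          have h2 : wc x ≤ wc t' := hwcmono (hsub2 hx) ht hx.2
          have h3 : wc s' ≤ wc x' := hwcmono hs (hsub2 hx') hx'.1
          have h4 : wc x' ≤ wc t' := hwcmono (hsub2 hx') ht hx'.2
          rw [heq] at h1 h3
          linarith
        exact hwcflatγ x x' (hsub2 hx) (hsub2 hx') hwx
      have h2 := varFT_sub hvcLBV hs ht hst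
      rw [h0] at h2
      simp only [ENNReal.toReal_zero] at h2
      linarith
    obtain ⟨M, hMmono, hMeq⟩ := transfer_exists hcd hwcmono hvcmono
      (fun u hu => variationOnFromTo.nonneg_of_le _ _ hu.1) hwcflat
    -- M-increments bounded by γstar-variation
    have hfinstar' : eVariationOn γstar (Icc 0 (wc d)) ≠ ⊤ := by
      rw [← hE]
      exact hfinstar.ne
    have hACstar' : AbsContOn γstar (Icc 0 (wc d)) := by
      rw [← hE]
      exact hACstar
    have hMvar : ∀ u' v', u' ∈ Icc 0 (wc d) → v' ∈ Icc 0 (wc d) → u' ≤ v' →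
        M v' - M u' ≤ (eVariationOn γstar (Icc 0 (wc d) ∩ Icc u' v')).toReal := by
      intro u' v' hu hv huv
      have hu2 : u' ∈ wc '' Icc c d := by rw [hE]; exact hu
      have hv2 : v' ∈ wc '' Icc c d := by rw [hE]; exact hv
      obtain ⟨s', hs', rfl⟩ := hu2
      obtain ⟨t', ht', rfl⟩ := hv2
      rcases le_total s' t' with h | h
      · rw [hMeq s' hs', hMeq t' ht']
        have h1 := star_var_eq (γ := γ.toFun) hwcmono hstar hs' ht' h
        rw [hE] at h1
        rw [varFT_sub hvcLBV hs' ht' h, h1]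
      · have heq : wc s' = wc t' := le_antisymm huv (hwcmono ht' hs' h)
        rw [hMeq s' hs', hMeq t' ht', hwcflat t' s' ht' hs' h heq.symm]
        simp only [sub_self]
        exact ENNReal.toReal_nonneg
    have hsum : ∀ ε > (0:ℝ), ∃ δ > (0:ℝ), ∀ (k : ℕ) (uu vv : Fin k → ℝ),
        (∀ i, uu i ∈ Icc 0 (wc d) ∧ vv i ∈ Icc 0 (wc d) ∧ uu i ≤ vv i) →
        (∀ i j, i ≠ j → Disjoint (Ioo (uu i) (vv i)) (Ioo (uu j) (vv j))) →
        (∑ i, (vv i - uu i)) < δ → (∑ i, (M (vv i) - M (uu i))) ≤ ε := by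
      intro ε hε
      obtain ⟨δ, hδ, hbound⟩ := absContOn_variation_sums hfinstar' hACstar' ε hε
      refine ⟨δ, hδ, fun k uu vv hmem hdisj hlen => ?_⟩
      calc ∑ i, (M (vv i) - M (uu i))
          ≤ ∑ i, (eVariationOn γstar (Icc 0 (wc d) ∩ Icc (uu i) (vv i))).toReal :=
            Finset.sum_le_sum fun i _ =>
              hMvar (uu i) (vv i) (hmem i).1 (hmem i).2.1 (hmem i).2.2
      _ ≤ ε := hbound k uu vv hmem hdisj hlen
    have hB2 := monotone_image_null_of_sums hMmono hsum hS'
    refine le_antisymm (le_trans (measure_mono ?_) hB2.le) zero_le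
    rintro x ⟨t, ht, hvx, hwS⟩
    refine ⟨wc t, ⟨?_, hwS⟩, by rw [hMeq t ht]; exact hvx⟩
    rw [← hE]
    exact ⟨t, ht, rfl⟩
  -- conclude the two parts of the L2p property
  constructor
  · -- local rectifiability of γ
    intro a' ha' b' hb'
    rcases le_or_gt a' b' with h | h
    · have ha'' : a' ∈ γt.I := by rw [← hγI]; exact ha'
      have hb'' : b' ∈ γt.I := by rw [← hγI]; exact hb'
      rw [hγI, inter_eq_self_of_subset_right (γt.ordConn.out ha'' hb'')]
      exact (key a' b' ha'' hb'' h).1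
    · rw [Icc_eq_empty (not_le.mpr h), inter_empty,
        eVariationOn.subsingleton _ subsingleton_empty]
      exact ENNReal.zero_lt_top
  · intro t₀ ht₀ L hLmono hLeq S hS
    have ht₀' : t₀ ∈ γt.I := by rw [← hγI]; exact ht₀
    obtain ⟨c, d, hcd_mem, hcov⟩ := exists_cover_seq ht₀'
    have hγLR : γ.LocRect := by
      intro a' ha' b' hb'
      rcases le_or_gt a' b' with h | h
      · have ha'' : a' ∈ γt.I := by rw [← hγI]; exact ha'
        have hb'' : b' ∈ γt.I := by rw [← hγI]; exact hb'
        rw [hγI, inter_eq_self_of_subset_right (γt.ordConn.out ha'' hb'')]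
        exact (key a' b' ha'' hb'' h).1
      · rw [Icc_eq_empty (not_le.mpr h), inter_empty,
          eVariationOn.subsingleton _ subsingleton_empty]
        exact ENNReal.zero_lt_top
    have hγLBV : LocallyBoundedVariationOn γ.toFun γ.I := fun a' b' ha' hb' =>
      (hγLR a' ha' b' hb').ne
    have hγtLBV : LocallyBoundedVariationOn γt.toFun γt.I := fun a' b' ha' hb' =>
      (hγtLR a' ha' b' hb').ne
    -- cover the target set
    set v : ℝ → ℝ := fun u => variationOnFromTo γ.toFun γ.I t₀ u with hv
    set wt : ℝ → ℝ := fun u => variationOnFromTo γt.toFun γt.I t₀ u with hwt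
    have hcover : (fun t => variationOnFromTo γ.toFun γ.I t₀ t) '' γ.I ∩ L ⁻¹' S ⊆
        ⋃ k : ℕ, (fun x => v (c k) + x) ''
          {x : ℝ | ∃ t ∈ Icc (c k) (d k),
            variationOnFromTo γ.toFun (Icc (c k) (d k)) (c k) t = x ∧
            variationOnFromTo γt.toFun (Icc (c k) (d k)) (c k) t ∈
              {y : ℝ | wt (c k) + y ∈ S}} := by
      rintro x ⟨⟨t, ht, rfl⟩, hxS⟩
      have ht2 : t ∈ γt.I := by rw [← hγI]; exact ht
      obtain ⟨k, hk1, hk2⟩ := hcov t ht2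
      obtain ⟨hck, hdk, hct₀, ht₀d⟩ := hcd_mem k
      have hck' : c k ∈ γ.I := by rw [hγI]; exact hck
      have hdk' : d k ∈ γ.I := by rw [hγI]; exact hdk
      have hsubγ : Icc (c k) (d k) ⊆ γ.I := γ.ordConn.out hck' hdk'
      have hsubt : Icc (c k) (d k) ⊆ γt.I := γt.ordConn.out hck hdk
      have htIcc : t ∈ Icc (c k) (d k) := ⟨hk1, hk2⟩
      refine mem_iUnion.mpr ⟨k, ⟨variationOnFromTo γ.toFun (Icc (c k) (d k)) (c k) t,
        ⟨t, htIcc, rfl, ?_⟩, ?_⟩⟩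
      · -- γt condition
        show wt (c k) + variationOnFromTo γt.toFun (Icc (c k) (d k)) (c k) t ∈ S
        rw [← variationOnFromTo_subset hsubt (left_mem_Icc.mpr (hct₀.trans ht₀d)) htIcc]
        rw [variationOnFromTo.add hγtLBV ht₀' hck ht2]
        rw [← hLeq t ht]
        exact hxS
      · -- translation identity
        show v (c k) + variationOnFromTo γ.toFun (Icc (c k) (d k)) (c k) t
          = variationOnFromTo γ.toFun γ.I t₀ t
        rw [← variationOnFromTo_subset hsubγ (left_mem_Icc.mpr (hct₀.trans ht₀d)) htIcc]
        exact variationOnFromTo.add hγLBV ht₀ hck' ht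
    refine le_antisymm (le_trans (measure_mono hcover) ?_) zero_le
    refine le_trans (measure_iUnion_le _) ?_
    rw [ENNReal.tsum_eq_zero.mpr ?_]
    intro k
    obtain ⟨hck, hdk, hct₀, ht₀d⟩ := hcd_mem k
    have hkey := (key (c k) (d k) hck hdk (hct₀.trans ht₀d)).2
      {y : ℝ | wt (c k) + y ∈ S} ?null
    · rw [image_add_left, measure_preimage_add]
      exact hkey
    · show volume ((fun y => wt (c k) + y) ⁻¹' S) = 0
      rw [measure_preimage_add]
      exact hS

end Backward
/-- **Proposition (characterization of the `L²_p`-property).**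
A mapping `f : D → ℝⁿ` has the `L²_p`-property if and only if `f⁻¹(y)`
contains no nondegenerate curve for every `y ∈ ℝⁿ`, and for `p`-a.e. closed
rectifiable curve `γ̃ = f ∘ γ` in `f(D)` the `f`-representation `γ*` of `γ`
with respect to `γ̃` (the unique curve with `γ = γ* ∘ l_{γ̃}`) is rectifiable
and absolutely continuous. -/
theorem hasL2p_iff_f_representation_AC
    (n : ℕ) (hn : 2 ≤ n)
    (D : Set (Eucl n)) (hDopen : IsOpen D) (hDconn : IsConnected D)
    (f : Eucl n → Eucl n) (hfcont : ContinuousOn f D)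
    (p : ℝ) :
    HasL2pProperty f D p ↔
      ((∀ y : Eucl n, ∀ γ : CurveIn n,
          (∀ t ∈ γ.I, γ.toFun t ∈ D ∧ f (γ.toFun t) = y) →
          ∀ s ∈ γ.I, ∀ t ∈ γ.I, γ.toFun s = γ.toFun t) ∧
       ∃ Γ₁ : Set (CurveIn n),
         (∀ β ∈ Γ₁, β.InSet (f '' D)) ∧ pModule p Γ₁ = 0 ∧
         ∀ (a b : ℝ), a ≤ b → ∀ γt : CurveIn n, γt.I = Set.Icc a b →
           γt.InSet (f '' D) → eVariationOn γt.toFun (Set.Icc a b) < ⊤ →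
           γt ∉ Γ₁ →
           ∀ γ : CurveIn n, γ.I = Set.Icc a b → γ.InSet D →
             (∀ t ∈ Set.Icc a b, f (γ.toFun t) = γt.toFun t) →
             ∀ γstar : ℝ → Eucl n,
               (∀ t ∈ Set.Icc a b,
                 γstar (variationOnFromTo γt.toFun (Set.Icc a b) a t) = γ.toFun t) →
               eVariationOn γstar
                   ((fun t => variationOnFromTo γt.toFun (Set.Icc a b) a t) '' Set.Icc a b) < ⊤ ∧
               AbsContOn γstar
                   ((fun t => variationOnFromTo γt.toFun (Set.Icc a b) a t) '' Set.Icc a b)) := by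
  constructor
  · intro h
    exact ⟨forward_conj1 h, l2p_forward_main h⟩
  · rintro ⟨h1, Γ₁, h2, h3, h4⟩
    exact l2p_backward h1 Γ₁ h2 h3 h4
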